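/- arXiv:1407.5745 — 4 statements merged into one kernel-verified Lean document; each statement's English description precedes it below -/
import Mathlib

section
/- Let X be a metric space, (Z,λ) a metric equiconnected space such that for all z₁, z₂ ∈ Z the map t ↦ λ(z₁,z₂,t) is Lipschitz on [0,1], and let g : X → Z be a mapping of the stable first Baire class. Then there exists a mapping f : X² → Z with diagonal g (i.e. f(x,x) = g(x) for all x ∈ X) such that for every fixed y ∈ X the map x ↦ f(x,y) is continuous and for every fixed x ∈ X the map y ↦ f(x,y) is Lipschitz. -/
open Set Filter Topology NNReal
set_option linter.unusedSectionVars false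

section aux

variable {X Z : Type*}

def myRhoSet [MetricSpace X] [MetricSpace Z] (g : X → Z) (ε : ℝ) (x : X) : Set ℝ :=
  {δ : ℝ | 0 ≤ δ ∧ δ ≤ 1 ∧ ∀ u v : X, dist u x ≤ δ → dist v x ≤ δ → dist (g u) (g v) ≤ ε}

noncomputable def myRho [MetricSpace X] [MetricSpace Z] (g : X → Z) (ε : ℝ) (x : X) : ℝ :=
  sSup (myRhoSet g ε x)

variable [MetricSpace X] [MetricSpace Z] {g : X → Z} {ε : ℝ}

lemma myRho_mem_zero (hε : 0 ≤ ε) (x : X) : (0:ℝ) ∈ myRhoSet g ε x := by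
  refine ⟨le_refl _, zero_le_one, fun u v hu hv => ?_⟩
  have hu' : u = x := by rwa [dist_le_zero] at hu
  have hv' : v = x := by rwa [dist_le_zero] at hv
  subst hu'; subst hv'; simpa using hε

lemma myRho_bddAbove (g : X → Z) (ε : ℝ) (x : X) : BddAbove (myRhoSet g ε x) :=
  ⟨1, fun _ hδ => hδ.2.1⟩

lemma myRho_nonneg (hε : 0 ≤ ε) (x : X) : 0 ≤ myRho g ε x :=
  le_csSup (myRho_bddAbove g ε x) (myRho_mem_zero hε x)

lemma myRho_le_one (hε : 0 ≤ ε) (x : X) : myRho g ε x ≤ 1 :=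
  csSup_le ⟨0, myRho_mem_zero hε x⟩ (fun _ hδ => hδ.2.1)

lemma myRho_pos (hg : Continuous g) (hε : 0 < ε) (x : X) : 0 < myRho g ε x := by
  obtain ⟨δ, hδpos, hδ⟩ := Metric.continuousAt_iff.mp hg.continuousAt (ε/2) (by linarith)
  have hmem : min (δ/2) 1 ∈ myRhoSet g ε x := by
    refine ⟨le_min (by linarith) zero_le_one, min_le_right _ _, fun u v hu hv => ?_⟩
    have hu2 : dist u x < δ := lt_of_le_of_lt (le_trans hu (min_le_left _ _)) (by linarith)
    have hv2 : dist v x < δ := lt_of_le_of_lt (le_trans hv (min_le_left _ _)) (by linarith)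
    have h1 := hδ hu2
    have h2 := hδ hv2
    calc dist (g u) (g v) ≤ dist (g u) (g x) + dist (g x) (g v) := dist_triangle _ _ _
      _ ≤ ε/2 + ε/2 := add_le_add h1.le (by rw [dist_comm]; exact h2.le)
      _ = ε := by ring
  exact lt_of_lt_of_le (lt_min (by linarith) one_pos) (le_csSup (myRho_bddAbove g ε x) hmem)

lemma myRho_spec (hε : 0 ≤ ε) {x y : X} (h : dist x y < myRho g ε x) :
    dist (g x) (g y) ≤ ε := by
  obtain ⟨δ, hδmem, hδ⟩ := exists_lt_of_lt_csSup ⟨0, myRho_mem_zero hε x⟩ h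
  have := hδmem.2.2 y x (by rw [dist_comm]; exact hδ.le) (by simp [hδmem.1])
  rwa [dist_comm]

lemma myRho_lipschitz (hε : 0 ≤ ε) : LipschitzWith 1 (myRho g ε (Z := Z)) := by
  apply LipschitzWith.of_dist_le_mul
  intro x y
  rw [NNReal.coe_one, one_mul, Real.dist_eq, abs_sub_le_iff]
  have key : ∀ a b : X, myRho g ε a - myRho g ε b ≤ dist a b := by
    intro a b
    rw [sub_le_iff_le_add]
    apply csSup_le ⟨0, myRho_mem_zero hε a⟩
    intro δ hδ
    rcases le_total δ (dist a b) with hle | hle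
    · exact le_trans hle (le_add_of_nonneg_right (myRho_nonneg hε b))
    · have hmem : δ - dist a b ∈ myRhoSet g ε b := by
        refine ⟨by linarith, by linarith [hδ.2.1, dist_nonneg (x := a) (y := b)], fun u v hu hv => ?_⟩
        refine hδ.2.2 u v ?_ ?_
        · calc dist u a ≤ dist u b + dist b a := dist_triangle _ _ _
            _ ≤ (δ - dist a b) + dist a b := by rw [dist_comm b a]; exact add_le_add_left hu _
            _ = δ := by ring
        · calc dist v a ≤ dist v b + dist b a := dist_triangle _ _ _
            _ ≤ (δ - dist a b) + dist a b := by rw [dist_comm b a]; exact add_le_add_left hv _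
            _ = δ := by ring
      have : δ - dist a b ≤ myRho g ε b := le_csSup (myRho_bddAbove g ε b) hmem
      linarith
  constructor
  · have := key x y; linarith
  · have := key y x; rw [dist_comm] at this; linarith

end aux


section aux2

variable {X Z : Type*}

noncomputable def myC (r : ℕ → X → ℝ) : ℕ → X → ℝ
  | 0, x => min (r 0 x) (r 1 x)
  | (n+1), x => min (myC r n x) (r (n+2) x)

lemma myC_zero (r : ℕ → X → ℝ) (x : X) : myC r 0 x = min (r 0 x) (r 1 x) := rfl
lemma myC_succ (r : ℕ → X → ℝ) (n : ℕ) (x : X) :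
    myC r (n+1) x = min (myC r n x) (r (n+2) x) := rfl

lemma myC_le (r : ℕ → X → ℝ) : ∀ n, ∀ j ≤ n + 1, ∀ x, myC r n x ≤ r j x := by
  intro n
  induction n with
  | zero => intro j hj x; interval_cases j
            · exact min_le_left _ _
            · exact min_le_right _ _
  | succ n ih =>
    intro j hj x
    rcases le_or_gt j (n+1) with h | h
    · exact le_trans (min_le_left _ _) (ih j h x)
    · have : j = n + 2 := le_antisymm hj h
      subst this
      exact min_le_right _ _

lemma myC_antitone (r : ℕ → X → ℝ) (n : ℕ) (x : X) : myC r (n+1) x ≤ myC r n x :=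
  min_le_left _ _

lemma myC_pos {r : ℕ → X → ℝ} (hr : ∀ n x, 0 < r n x) : ∀ n x, 0 < myC r n x := by
  intro n
  induction n with
  | zero => intro x; exact lt_min (hr 0 x) (hr 1 x)
  | succ n ih => intro x; exact lt_min (ih x) (hr (n+2) x)

lemma myC_cont [TopologicalSpace X] {r : ℕ → X → ℝ} (hr : ∀ n, Continuous (r n)) :
    ∀ n, Continuous (myC r n) := by
  intro n
  induction n with
  | zero => exact (hr 0).min (hr 1)
  | succ n ih => exact ih.min (hr (n+2))

noncomputable def myU (a : ℕ → X → ℝ) (k : ℕ) (x : X) (s : ℝ) : unitInterval :=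
  Set.projIcc 0 1 zero_le_one ((s - a (k+1) x) / (a k x - a (k+1) x))

lemma myU_eq_zero {a : ℕ → X → ℝ} {k : ℕ} {x : X} {s : ℝ}
    (hlt : a (k+1) x < a k x) (hs : s ≤ a (k+1) x) : myU a k x s = 0 := by
  have hnum : s - a (k+1) x ≤ 0 := by linarith
  have hden : 0 < a k x - a (k+1) x := by linarith
  have : (s - a (k+1) x) / (a k x - a (k+1) x) ≤ 0 := div_nonpos_of_nonpos_of_nonneg hnum hden.le
  exact Subtype.ext (by simp [myU, Set.projIcc, min_eq_right (le_trans this zero_le_one),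
    max_eq_left this])

lemma myU_eq_one {a : ℕ → X → ℝ} {k : ℕ} {x : X} {s : ℝ}
    (hlt : a (k+1) x < a k x) (hs : a k x ≤ s) : myU a k x s = 1 := by
  have hden : 0 < a k x - a (k+1) x := by linarith
  have h1 : (1:ℝ) ≤ (s - a (k+1) x) / (a k x - a (k+1) x) := by
    rw [le_div_iff₀ hden]; linarith
  exact Subtype.ext (by simp [myU, Set.projIcc, min_eq_left h1, max_eq_right (le_trans zero_le_one h1)])

lemma myU_lipschitz {a : ℕ → X → ℝ} (k : ℕ) (x : X) :
    ∃ K : ℝ≥0, LipschitzWith K (myU a k x) := by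
  refine ⟨1 * ‖(a k x - a (k+1) x)⁻¹‖₊, (LipschitzWith.projIcc zero_le_one).comp ?_⟩
  apply LipschitzWith.of_dist_le_mul
  intro s t
  have : (s - a (k+1) x) / (a k x - a (k+1) x) - (t - a (k+1) x) / (a k x - a (k+1) x)
      = (s - t) * (a k x - a (k+1) x)⁻¹ := by ring
  rw [Real.dist_eq, this, abs_mul, Real.dist_eq]
  rw [coe_nnnorm, Real.norm_eq_abs, mul_comm]

lemma myU_continuous [TopologicalSpace X] {a : ℕ → X → ℝ} (k : ℕ)
    (ha : ∀ n, Continuous (a n)) (hlt : ∀ n x, a (n+1) x < a n x) :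
    Continuous (fun p : X × ℝ => myU a k p.1 p.2) := by
  apply continuous_projIcc.comp
  apply Continuous.div
  · exact continuous_snd.sub ((ha (k+1)).comp continuous_fst)
  · exact ((ha k).comp continuous_fst).sub ((ha (k+1)).comp continuous_fst)
  · intro p; have := hlt k p.1; intro h; linarith [sub_eq_zero.mp h]

noncomputable def myF (e : Z → Z → unitInterval → Z) (gs : ℕ → X → Z) (a : ℕ → X → ℝ) :
    ℕ → X → ℝ → Z
  | 0, x, s => e (gs 1 x) (gs 0 x) (myU a 0 x s)
  | (n+1), x, s => e (gs (n+2) x) (myF e gs a n x s) (myU a (n+1) x s)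

lemma myF_zero (e : Z → Z → unitInterval → Z) (gs : ℕ → X → Z) (a : ℕ → X → ℝ) (x : X) (s : ℝ) :
    myF e gs a 0 x s = e (gs 1 x) (gs 0 x) (myU a 0 x s) := rfl

lemma myF_succ (e : Z → Z → unitInterval → Z) (gs : ℕ → X → Z) (a : ℕ → X → ℝ) (n : ℕ) (x : X) (s : ℝ) :
    myF e gs a (n+1) x s = e (gs (n+2) x) (myF e gs a n x s) (myU a (n+1) x s) := rfl

end aux2


section aux3

variable {X Z : Type*} [MetricSpace Z]

lemma lipOn_of_eq {K : ℝ≥0} {f h : ℝ → Z} {S : Set ℝ} (hf : LipschitzWith K f)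
    (heq : ∀ s ∈ S, h s = f s) : LipschitzOnWith K h S := by
  intro s hs t ht
  rw [heq s hs, heq t ht]
  exact hf s t

lemma lipschitz_glue {K : ℝ≥0} {f : ℝ → Z} {c : ℝ}
    (h1 : LipschitzOnWith K f (Iic c)) (h2 : LipschitzOnWith K f (Ici c)) :
    LipschitzWith K f := by
  apply LipschitzWith.of_dist_le_mul
  have key : ∀ x y : ℝ, x ≤ y → dist (f x) (f y) ≤ K * dist x y := by
    intro x y hxy
    rcases le_total y c with hy | hy
    · exact h1.dist_le_mul x (mem_Iic.mpr (le_trans hxy hy)) y (mem_Iic.mpr hy)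
    · rcases le_total c x with hx | hx
      · exact h2.dist_le_mul x (mem_Ici.mpr hx) y (mem_Ici.mpr hy)
      · calc dist (f x) (f y) ≤ dist (f x) (f c) + dist (f c) (f y) := dist_triangle _ _ _
          _ ≤ K * dist x c + K * dist c y :=
            add_le_add (h1.dist_le_mul x (mem_Iic.mpr hx) c (mem_Iic.mpr le_rfl)) (h2.dist_le_mul c (mem_Ici.mpr le_rfl) y (mem_Ici.mpr hy))
          _ = K * (dist x c + dist c y) := by ring
          _ = K * dist x y := by
            rw [Real.dist_eq, Real.dist_eq, Real.dist_eq,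
              abs_of_nonpos (by linarith), abs_of_nonpos (by linarith),
              abs_of_nonpos (by linarith)]
            ring
  intro x y
  rcases le_total x y with h | h
  · exact key x y h
  · rw [dist_comm, dist_comm x y]; exact key y x h

variable {e : Z → Z → unitInterval → Z} {gs : ℕ → X → Z} {a : ℕ → X → ℝ}
  (hlt : ∀ n (x : X), a (n+1) x < a n x)
include hlt

lemma myF_below (he0 : ∀ z w, e z w 0 = z) {n : ℕ} {x : X} {s : ℝ}
    (hs : s ≤ a (n+1) x) : myF e gs a n x s = gs (n+1) x := by
  cases n with
  | zero => rw [myF_zero, myU_eq_zero (hlt 0 x) hs, he0]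
  | succ n => rw [myF_succ, myU_eq_zero (hlt (n+1) x) hs, he0]

lemma myF_freeze (he1 : ∀ z w, e z w 1 = w) {n : ℕ} {x : X} {s : ℝ}
    (hs : a (n+1) x ≤ s) : myF e gs a (n+1) x s = myF e gs a n x s := by
  rw [myF_succ, myU_eq_one (hlt (n+1) x) hs, he1]

lemma a_antitone {n m : ℕ} (hnm : n ≤ m) (x : X) : a m x ≤ a n x := by
  induction m with
  | zero => rw [Nat.le_zero.mp hnm]
  | succ m ih =>
    rcases Nat.lt_or_ge n (m+1) with h | h
    · exact le_trans (hlt m x).le (ih (Nat.lt_succ_iff.mp h))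
    · rw [le_antisymm hnm h]

lemma myF_freeze_ge (he1 : ∀ z w, e z w 1 = w) {n : ℕ} {x : X} {s : ℝ}
    (hs : a (n+1) x ≤ s) : ∀ m, n ≤ m → myF e gs a m x s = myF e gs a n x s := by
  intro m hm
  induction m with
  | zero => rw [Nat.le_zero.mp hm]
  | succ m ih =>
    rcases Nat.lt_or_ge n (m+1) with h | h
    · have hm' : n ≤ m := Nat.lt_succ_iff.mp h
      rw [myF_freeze hlt he1 (le_trans (a_antitone hlt (Nat.succ_le_succ hm') x) hs)]
      exact ih hm'
    · rw [le_antisymm hm h]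

lemma myF_band (he0 : ∀ z w, e z w 0 = z) {k : ℕ} {x : X} {s : ℝ}
    (hs : s ≤ a k x) : myF e gs a k x s = e (gs (k+1) x) (gs k x) (myU a k x s) := by
  cases k with
  | zero => rfl
  | succ k => rw [myF_succ, myF_below hlt he0 hs]

lemma myF_stable {gx : Z} (he0 : ∀ z w, e z w 0 = z) (he1 : ∀ z w, e z w 1 = w)
    (heid : ∀ z t, e z z t = z)
    {N : ℕ} {x : X} (hstab : ∀ m, N ≤ m → gs m x = gx) :
    ∀ n, N ≤ n → ∀ s, myF e gs a n x s = myF e gs a N x s := by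
  intro n hn
  induction n with
  | zero => rw [Nat.le_zero.mp hn]; intro s; rfl
  | succ n ih =>
    rcases Nat.lt_or_ge N (n+1) with h | h
    · have hn' : N ≤ n := Nat.lt_succ_iff.mp h
      intro s
      rcases le_total s (a (n+1) x) with hcase | hcase
      · have h1 : myF e gs a n x s = gx := by
          rw [myF_below hlt he0 hcase]
          exact hstab (n+1) (le_trans hn' (Nat.le_succ n))
        rw [myF_succ, h1, hstab (n+2) (by omega), heid, ← h1]
        exact ih hn' s
      · rw [myF_freeze hlt he1 hcase]; exact ih hn' s
    · rw [le_antisymm hn h]; intro s; rfl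


lemma myF_lipschitz (he0 : ∀ z w, e z w 0 = z) (he1 : ∀ z w, e z w 1 = w)
    (helip : ∀ z₁ z₂ : Z, ∃ K : ℝ≥0, LipschitzWith K (e z₁ z₂)) (n : ℕ) (x : X) :
    ∃ K : ℝ≥0, LipschitzWith K (fun s => myF e gs a n x s) := by
  induction n with
  | zero =>
    obtain ⟨K, hK⟩ := helip (gs 1 x) (gs 0 x)
    obtain ⟨K', hK'⟩ := myU_lipschitz (a := a) 0 x
    exact ⟨K * K', hK.comp hK'⟩
  | succ n ih =>
    obtain ⟨K, hK⟩ := ih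
    obtain ⟨K1, hK1⟩ := helip (gs (n+2) x) (gs (n+1) x)
    obtain ⟨K2, hK2⟩ := myU_lipschitz (a := a) (n+1) x
    refine ⟨max K (K1 * K2), lipschitz_glue (c := a (n+1) x) ?_ ?_⟩
    · refine lipOn_of_eq ((hK1.comp hK2).weaken (le_max_right _ _)) ?_
      intro s hs
      rw [myF_succ, myF_below hlt he0 (mem_Iic.mp hs)]
      rfl
    · refine lipOn_of_eq (hK.weaken (le_max_left _ _)) ?_
      intro s hs
      exact myF_freeze hlt he1 (mem_Ici.mp hs)

omit hlt in
lemma myF_cont [MetricSpace X] (he : Continuous fun p : Z × Z × unitInterval => e p.1 p.2.1 p.2.2)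
    (hgs : ∀ n, Continuous (gs n)) (ha : ∀ n, Continuous (a n))
    (hlt : ∀ n (x : X), a (n+1) x < a n x) (n : ℕ) :
    Continuous (fun p : X × ℝ => myF e gs a n p.1 p.2) := by
  have happ : ∀ (z₁ z₂ : X × ℝ → Z) (t : X × ℝ → unitInterval),
      Continuous z₁ → Continuous z₂ → Continuous t →
      Continuous (fun q : X × ℝ => e (z₁ q) (z₂ q) (t q)) := by
    intro z₁ z₂ t h1 h2 h3
    exact he.comp (h1.prodMk (h2.prodMk h3))
  induction n with
  | zero =>
    exact happ _ _ _ ((hgs 1).comp continuous_fst) ((hgs 0).comp continuous_fst)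
      (myU_continuous (a := a) 0 ha hlt)
  | succ n ih =>
    exact happ _ _ _ ((hgs (n+2)).comp continuous_fst) ih (myU_continuous (a := a) (n+1) ha hlt)

end aux3

set_option maxHeartbeats 1000000

/-- Theorem 4.5: for a metric space `X`, a metric equiconnected space `(Z, e)` with `e`
Lipschitz in the third variable, and a mapping `g : X → Z` of the stable first Baire
class, there exists a mapping `f : X² → Z` with diagonal `g` which is continuous in the
first variable and Lipschitz in the second one. -/
theorem stmt_10 {X Z : Type*} [MetricSpace X] [MetricSpace Z]
    (e : Z → Z → unitInterval → Z)
    (he : Continuous fun p : Z × Z × unitInterval => e p.1 p.2.1 p.2.2)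
    (he0 : ∀ x y, e x y 0 = x) (he1 : ∀ x y, e x y 1 = y)
    (heid : ∀ x t, e x x t = x)
    (helip : ∀ z₁ z₂ : Z, ∃ K : ℝ≥0, LipschitzWith K (e z₁ z₂))
    (g : X → Z)
    (hg : ∃ gs : ℕ → X → Z, (∀ n, Continuous (gs n)) ∧
      ∀ x, ∃ N : ℕ, ∀ n ≥ N, gs n x = g x) :
    ∃ f : X → X → Z, (∀ x, f x x = g x) ∧
      (∀ y, Continuous fun x => f x y) ∧
      (∀ x, ∃ K : ℝ≥0, LipschitzWith K (f x)) := by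
  obtain ⟨gs, hgs_cont, hgs_stab⟩ := hg
  set ρn : ℕ → X → ℝ := fun n x => myRho (gs n) ((1/2)^n) x with hρn
  have hεpos : ∀ n : ℕ, (0:ℝ) < (1/2)^n := fun n => pow_pos (by norm_num) n
  have hρpos : ∀ n (x : X), 0 < ρn n x := fun n x => myRho_pos (hgs_cont n) (hεpos n) x
  have hρle1 : ∀ n (x : X), ρn n x ≤ 1 := fun n x => myRho_le_one (hεpos n).le x
  have hρcont : ∀ n, Continuous (ρn n) := fun n => (myRho_lipschitz (hεpos n).le).continuous
  have hρspec : ∀ n (x y : X), dist x y < ρn n x → dist (gs n x) (gs n y) ≤ (1/2)^n :=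
    fun n x y h => myRho_spec (hεpos n).le h
  set aa : ℕ → X → ℝ := fun n x => (1/2)^n * myC ρn n x with haa
  have hCpos := myC_pos hρpos
  have haapos : ∀ n (x : X), 0 < aa n x := fun n x => mul_pos (hεpos n) (hCpos n x)
  have haalt : ∀ n (x : X), aa (n+1) x < aa n x := by
    intro n x
    have h1 : aa (n+1) x ≤ (1/2)^(n+1) * myC ρn n x :=
      mul_le_mul_of_nonneg_left (myC_antitone _ n x) (hεpos (n+1)).le
    have h2 : ((1:ℝ)/2)^(n+1) * myC ρn n x < (1/2)^n * myC ρn n x := by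
      apply mul_lt_mul_of_pos_right _ (hCpos n x)
      rw [pow_succ]
      nlinarith [hεpos n]
    exact lt_of_le_of_lt h1 h2
  have haale : ∀ n (x : X), aa n x ≤ (1/2)^n := by
    intro n x
    have : myC ρn n x ≤ 1 := le_trans (myC_le ρn n 0 (by omega) x) (hρle1 0 x)
    calc aa n x = (1/2)^n * myC ρn n x := rfl
      _ ≤ (1/2)^n * 1 := mul_le_mul_of_nonneg_left this (hεpos n).le
      _ = (1/2)^n := mul_one _
  have haacont : ∀ n, Continuous (aa n) := fun n => continuous_const.mul (myC_cont hρcont n)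
  set f : X → X → Z :=
    fun x y => @limUnder Z _ ℕ ⟨g x⟩ atTop (fun n => myF e gs aa n x (dist x y)) with hf
  have hval : ∀ (x y : X) (n : ℕ), aa (n+1) x ≤ dist x y →
      f x y = myF e gs aa n x (dist x y) := by
    intro x y n hn
    haveI : Nonempty Z := ⟨g x⟩
    rw [hf]
    apply Tendsto.limUnder_eq
    apply Tendsto.congr' _ tendsto_const_nhds
    filter_upwards [eventually_ge_atTop n] with m hm
    exact (myF_freeze_ge haalt he1 hn m hm).symm
  have hdiag : ∀ x : X, f x x = g x := by
    intro x
    haveI : Nonempty Z := ⟨g x⟩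
    rw [hf]
    apply Tendsto.limUnder_eq
    apply Tendsto.congr' _ tendsto_const_nhds
    obtain ⟨N, hN⟩ := hgs_stab x
    filter_upwards [eventually_ge_atTop N] with m hm
    rw [dist_self, myF_below haalt he0 (haapos (m+1) x).le]
    exact (hN (m+1) (by omega)).symm
  refine ⟨f, hdiag, ?_, ?_⟩
  · -- continuity in the first variable
    intro y
    rw [continuous_iff_continuousAt]
    intro x₀
    by_cases hxy : x₀ = y
    · subst hxy
      rw [Metric.continuousAt_iff]
      intro ε hε
      -- uniform closeness of e near (g x₀, g x₀)
      set E' : C((Z × Z) × unitInterval, Z) :=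
        ⟨fun q => e q.1.1 q.1.2 q.2, by
          have h : (fun q : (Z × Z) × unitInterval => e q.1.1 q.1.2 q.2)
              = (fun p : Z × Z × unitInterval => e p.1 p.2.1 p.2.2)
                ∘ (fun q : (Z × Z) × unitInterval => (q.1.1, q.1.2, q.2)) := rfl
          rw [h]
          exact he.comp ((continuous_fst.comp continuous_fst).prodMk ((continuous_snd.comp continuous_fst).prodMk continuous_snd))⟩ with hE'
      set Φ := E'.curry with hΦdef
      obtain ⟨η, hηpos, hη⟩ :=
        Metric.continuousAt_iff.mp (Φ.continuous.continuousAt (x := (g x₀, g x₀))) ε hε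
      have hbound : ∀ z₁ z₂ : Z, dist z₁ (g x₀) < η → dist z₂ (g x₀) < η →
          ∀ t : unitInterval, dist (e z₁ z₂ t) (g x₀) < ε := by
        intro z₁ z₂ h1 h2 t
        have hd : dist ((z₁, z₂)) ((g x₀, g x₀)) < η := by
          rw [Prod.dist_eq]; exact max_lt h1 h2
        have hc := hη hd
        have hv1 : Φ (z₁, z₂) t = e z₁ z₂ t := by rw [hΦdef, ContinuousMap.curry_apply]; rfl
        have hv2 : Φ (g x₀, g x₀) t = g x₀ := by
          rw [hΦdef, ContinuousMap.curry_apply]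
          exact heid _ t
        calc dist (e z₁ z₂ t) (g x₀) = dist (Φ (z₁, z₂) t) (Φ (g x₀, g x₀) t) := by
              rw [hv1, hv2]
          _ ≤ dist (Φ (z₁, z₂)) (Φ (g x₀, g x₀)) := ContinuousMap.dist_apply_le_dist t
          _ < ε := hc
      obtain ⟨Ny, hNy⟩ := hgs_stab x₀
      obtain ⟨K0, hK0⟩ : ∃ K0 : ℕ, ((1:ℝ)/2)^K0 < η :=
        _root_.exists_pow_lt_of_lt_one hηpos (by norm_num)
      set Kk := max (max Ny K0) 1 with hKk
      have hKk1 : 1 ≤ Kk := le_max_right _ _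
      have hKkNy : Ny ≤ Kk := le_trans (le_max_left _ _) (le_max_left _ _)
      have hKkK0 : K0 ≤ Kk := le_trans (le_max_right _ _) (le_max_left _ _)
      have hKη : ((1:ℝ)/2)^Kk < η :=
        lt_of_le_of_lt (pow_le_pow_of_le_one (by norm_num) (by norm_num) hKkK0) hK0
      obtain ⟨δ₁, hδ₁pos, hδ₁⟩ :=
        Metric.continuousAt_iff.mp ((haacont Kk).continuousAt (x := x₀)) (aa Kk x₀ / 2)
          (by have := haapos Kk x₀; linarith)
      refine ⟨min δ₁ (aa Kk x₀ / 2), lt_min hδ₁pos (by have := haapos Kk x₀; linarith), ?_⟩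
      intro x hx
      rw [hdiag x₀]
      rcases eq_or_ne x x₀ with rfl | hne
      · rw [hdiag x]; simpa using hε
      · have hspos : 0 < dist x x₀ := dist_pos.mpr hne
        have hsKk : dist x x₀ < aa Kk x := by
          have h1 : dist (aa Kk x) (aa Kk x₀) < aa Kk x₀ / 2 :=
            hδ₁ (lt_of_lt_of_le hx (min_le_left _ _))
          have h2 : dist x x₀ < aa Kk x₀ / 2 := lt_of_lt_of_le hx (min_le_right _ _)
          rw [Real.dist_eq, abs_lt] at h1
          linarith [h1.1, h1.2]
        have hex : ∃ m, aa m x < dist x x₀ := by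
          obtain ⟨m, hm⟩ := _root_.exists_pow_lt_of_lt_one hspos (show (1:ℝ)/2 < 1 by norm_num)
          exact ⟨m, lt_of_le_of_lt (haale m x) hm⟩
        have hm₀ : aa (Nat.find hex) x < dist x x₀ := Nat.find_spec hex
        have hm₀K : Kk < Nat.find hex := by
          by_contra h
          push_neg at h
          have : aa Kk x ≤ aa (Nat.find hex) x := a_antitone haalt h x
          linarith
        set k := Nat.find hex - 1 with hk
        have hk1 : k + 1 = Nat.find hex := Nat.succ_pred_eq_of_pos (lt_of_le_of_lt (Nat.zero_le Kk) hm₀K)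
        have hkK : Kk ≤ k := Nat.le_pred_of_lt hm₀K
        have hk1' : 1 ≤ k := le_trans hKk1 hkK
        have hband1 : aa (k+1) x ≤ dist x x₀ := by rw [hk1]; exact hm₀.le
        have hband2 : dist x x₀ ≤ aa k x := by
          have h := Nat.find_min hex (m := k) (by rw [← hk1]; exact Nat.lt_succ_self k)
          push_neg at h; exact h
        rw [hval x x₀ k hband1, myF_band haalt he0 hband2]
        have hCle1 : myC ρn k x ≤ ρn k x := myC_le ρn k k (Nat.le_succ k) x
        have hCle2 : myC ρn k x ≤ ρn (k+1) x := myC_le ρn k (k+1) (le_refl _) x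
        have hhalf : ((1:ℝ)/2)^k ≤ 1/2 := by
          calc ((1:ℝ)/2)^k ≤ (1/2)^1 := pow_le_pow_of_le_one (by norm_num) (by norm_num) hk1'
            _ = 1/2 := pow_one _
        have hs1 : dist x x₀ < ρn k x := by
          have : aa k x ≤ (1/2) * ρn k x := by
            calc aa k x = (1/2)^k * myC ρn k x := rfl
              _ ≤ (1/2)^k * ρn k x := mul_le_mul_of_nonneg_left hCle1 (hεpos k).le
              _ ≤ (1/2) * ρn k x := mul_le_mul_of_nonneg_right hhalf (hρpos k x).le
          have := hρpos k x
          linarith [hband2]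
        have hs2 : dist x x₀ < ρn (k+1) x := by
          have : aa k x ≤ (1/2) * ρn (k+1) x := by
            calc aa k x = (1/2)^k * myC ρn k x := rfl
              _ ≤ (1/2)^k * ρn (k+1) x := mul_le_mul_of_nonneg_left hCle2 (hεpos k).le
              _ ≤ (1/2) * ρn (k+1) x := mul_le_mul_of_nonneg_right hhalf (hρpos (k+1) x).le
          have := hρpos (k+1) x
          linarith [hband2]
        have hpowk : ((1:ℝ)/2)^k < η :=
          lt_of_le_of_lt (pow_le_pow_of_le_one (by norm_num) (by norm_num) hkK) hKη
        have hpowk1 : ((1:ℝ)/2)^(k+1) < η :=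
          lt_of_le_of_lt (pow_le_pow_of_le_one (by norm_num) (by norm_num) (le_trans hkK (Nat.le_succ k))) hKη
        have hd1 : dist (gs k x) (g x₀) < η := by
          have h := hρspec k x x₀ hs1
          rw [hNy k (le_trans hKkNy hkK)] at h
          exact lt_of_le_of_lt h hpowk
        have hd2 : dist (gs (k+1) x) (g x₀) < η := by
          have h := hρspec (k+1) x x₀ hs2
          rw [hNy (k+1) (le_trans (le_trans hKkNy hkK) (Nat.le_succ k))] at h
          exact lt_of_le_of_lt h hpowk1
        exact hbound _ _ hd2 hd1 _
    · have hs₀ : 0 < dist x₀ y := dist_pos.mpr hxy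
      obtain ⟨n, hn⟩ := _root_.exists_pow_lt_of_lt_one hs₀ (show (1:ℝ)/2 < 1 by norm_num)
      have hopen : IsOpen {x : X | aa (n+1) x < dist x y} :=
        isOpen_lt (haacont (n+1)) (continuous_id.dist continuous_const)
      have hx₀mem : x₀ ∈ {x : X | aa (n+1) x < dist x y} :=
        lt_of_le_of_lt (le_trans (haale (n+1) x₀)
          (pow_le_pow_of_le_one (by norm_num) (by norm_num) (Nat.le_succ n))) hn
      have hcontF : ContinuousAt (fun x => myF e gs aa n x (dist x y)) x₀ := by
        have hc : Continuous fun x : X => myF e gs aa n x (dist x y) := by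
          have := (myF_cont (gs := gs) (a := aa) he hgs_cont haacont haalt n).comp
            (continuous_id.prodMk (continuous_id.dist (continuous_const (y := y))))
          exact this
        exact hc.continuousAt
      apply hcontF.congr
      filter_upwards [hopen.mem_nhds hx₀mem] with x hx
      exact (hval x y n (le_of_lt hx)).symm
  · -- Lipschitz in the second variable
    intro x
    obtain ⟨N, hN⟩ := hgs_stab x
    have hfx : ∀ y, f x y = myF e gs aa N x (dist x y) := by
      intro y
      haveI : Nonempty Z := ⟨g x⟩
      rw [hf]
      apply Tendsto.limUnder_eq
      apply Tendsto.congr' _ tendsto_const_nhds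
      filter_upwards [eventually_ge_atTop N] with m hm
      exact (myF_stable haalt he0 he1 heid (fun m hm => hN m hm) m hm (dist x y)).symm
    obtain ⟨K, hK⟩ := myF_lipschitz haalt he0 he1 helip N x
    refine ⟨K * 1, ?_⟩
    have heq : f x = (fun s => myF e gs aa N x s) ∘ (dist x) := funext hfx
    rw [heq]
    exact hK.comp (LipschitzWith.dist_right x)
end

section
/- Let X be a metric space and (Z,λ) a metric equiconnected space such that for all z₁, z₂ ∈ Z the map t ↦ λ(z₁,z₂,t) is Lipschitz on [0,1] and such that Z is an absolute extensor for X. For a mapping g : X → Z the following are equivalent: (i) g is of the stable first Baire class; (ii) there exists a mapping f : X² → Z with diagonal g such that for every fixed y ∈ X the map x ↦ f(x,y) is continuous and for every fixed x ∈ X the map y ↦ f(x,y) is Lipschitz; (iii) there exists a mapping f : X² → Z with diagonal g such that for every fixed y ∈ X the map x ↦ f(x,y) is continuous and for every x₀ ∈ X the map y ↦ f(x₀,y) is pointwise Lipschitz at the point x₀. -/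
open Set Filter Topology NNReal
open Metric

lemma aux_III_I {X Z : Type*} [MetricSpace X] [MetricSpace Z]
    (hAE : ∀ A : Set X, IsClosed A → ∀ u : A → Z, Continuous u →
      ∃ v : X → Z, Continuous v ∧ ∀ a : A, v a = u a)
    (g : X → Z) (f : X → X → Z) (hdiag : ∀ x, f x x = g x)
    (hcx : ∀ y, Continuous fun x => f x y)
    (hpl : ∀ x₀, ∃ C : ℝ, ∀ y, dist (f x₀ y) (f x₀ x₀) ≤ C * dist y x₀) :
    ∃ gs : ℕ → X → Z, (∀ n, Continuous (gs n)) ∧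
      ∀ x, ∃ N : ℕ, ∀ n ≥ N, gs n x = g x := by
  set A : ℕ → Set X := fun n => {x | ∀ y, dist (f x y) (f x x) ≤ n * dist y x} with hA
  -- A n is closed
  have hAclosed : ∀ n, IsClosed (A n) := by
    intro n
    apply isClosed_of_closure_subset
    intro x hx
    have hne : (𝓝[A n] x).NeBot := mem_closure_iff_nhdsWithin_neBot.mp hx
    -- tendsto of diagonal along the filter
    have hdiagt : Tendsto (fun x' => f x' x') (𝓝[A n] x) (𝓝 (f x x)) := by
      rw [tendsto_iff_dist_tendsto_zero]
      have hb : Tendsto (fun x' => (n : ℝ) * dist x x' + dist (f x' x) (f x x))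
          (𝓝[A n] x) (𝓝 0) := by
        have h1 : Tendsto (fun x' => dist x x') (𝓝[A n] x) (𝓝 0) := by
          have h1' : Tendsto (fun x' : X => dist x x') (𝓝 x) (𝓝 (dist x x)) :=
            Continuous.tendsto (continuous_const.dist continuous_id) x
          simp only [dist_self] at h1'
          exact h1'.mono_left nhdsWithin_le_nhds
        have h2 : Tendsto (fun x' => dist (f x' x) (f x x)) (𝓝[A n] x) (𝓝 0) := by
          have h2' : Tendsto (fun x' : X => dist (f x' x) (f x x)) (𝓝 x) (𝓝 (dist (f x x) (f x x))) :=
            Continuous.tendsto ((hcx x).dist continuous_const) x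
          simp only [dist_self] at h2'
          exact h2'.mono_left nhdsWithin_le_nhds
        have := (h1.const_mul (n : ℝ)).add h2
        simpa using this
      apply squeeze_zero' (g := fun x' => (n:ℝ) * dist x x' + dist (f x' x) (f x x)) _ _ hb
      · filter_upwards with t; exact dist_nonneg
      · filter_upwards [self_mem_nhdsWithin] with x' hx'
        calc dist (f x' x') (f x x) ≤ dist (f x' x') (f x' x) + dist (f x' x) (f x x) :=
              dist_triangle _ _ _
          _ ≤ (n:ℝ) * dist x x' + dist (f x' x) (f x x) := by
              have := hx' x
              rw [dist_comm (f x' x') (f x' x)]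
              linarith
    intro y
    have h1 : Tendsto (fun x' => dist (f x' y) (f x' x')) (𝓝[A n] x)
        (𝓝 (dist (f x y) (f x x))) :=
      Tendsto.dist (((hcx y).continuousAt).tendsto.mono_left nhdsWithin_le_nhds) hdiagt
    have h2 : Tendsto (fun x' => (n : ℝ) * dist y x') (𝓝[A n] x) (𝓝 ((n:ℝ) * dist y x)) := by
      have : Tendsto (fun x' : X => (n:ℝ) * dist y x') (𝓝 x) (𝓝 ((n:ℝ) * dist y x)) :=
        Continuous.tendsto (continuous_const.mul (continuous_const.dist continuous_id)) x
      exact this.mono_left nhdsWithin_le_nhds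
    refine le_of_tendsto_of_tendsto h1 h2 ?_
    filter_upwards [self_mem_nhdsWithin] with x' hx'
    exact hx' y
  -- g is continuous on A n
  have hgcont : ∀ n : ℕ, Continuous (fun a : A n => g a) := by
    intro n
    rw [Metric.continuous_iff]
    rintro ⟨b, hb⟩ ε hε
    obtain ⟨δ₁, hδ₁, hδ₁'⟩ := Metric.continuous_iff.mp (hcx b) b (ε/2) (by linarith)
    refine ⟨min δ₁ (ε/(2*(n+1))), by positivity, ?_⟩
    rintro ⟨a, ha⟩ hab
    rw [Subtype.dist_eq] at hab
    simp only at hab ⊢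
    have hd1 : dist a b < δ₁ := lt_of_lt_of_le hab (min_le_left _ _)
    have hd2 : dist a b < ε/(2*(n+1)) := lt_of_lt_of_le hab (min_le_right _ _)
    have k1 : dist (f a b) (f b b) < ε/2 := hδ₁' a hd1
    have k2 : dist (f a b) (f a a) ≤ n * dist b a := ha b
    calc dist (g a) (g b) = dist (f a a) (f b b) := by rw [hdiag, hdiag]
      _ ≤ dist (f a a) (f a b) + dist (f a b) (f b b) := dist_triangle _ _ _
      _ ≤ (n:ℝ) * dist b a + dist (f a b) (f b b) := by
          rw [dist_comm (f a a) (f a b)]; linarith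
      _ < ε := by
          rw [dist_comm b a]
          have : (n:ℝ) * dist a b ≤ (n:ℝ) * (ε/(2*(n+1))) :=
            mul_le_mul_of_nonneg_left hd2.le (by positivity)
          have hnn : (n:ℝ) * (ε/(2*(n+1))) < ε/2 := by
            rw [mul_div_assoc']
            rw [div_lt_div_iff₀ (by positivity) (by norm_num)]
            have hn0 : (0:ℝ) ≤ (n:ℝ) := Nat.cast_nonneg n
            nlinarith
          linarith
  -- extend
  choose v hvcont hveq using fun n => hAE (A n) (hAclosed n) (fun a => g a) (hgcont n)
  refine ⟨v, hvcont, ?_⟩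
  intro x
  obtain ⟨C, hC⟩ := hpl x
  refine ⟨⌈max C 0⌉₊, ?_⟩
  intro n hn
  have hx : x ∈ A n := by
    intro y
    calc dist (f x y) (f x x) ≤ C * dist y x := hC y
      _ ≤ (n:ℝ) * dist y x := by
        apply mul_le_mul_of_nonneg_right _ dist_nonneg
        calc C ≤ max C 0 := le_max_left _ _
          _ ≤ (⌈max C 0⌉₊ : ℝ) := Nat.le_ceil _
          _ ≤ (n : ℝ) := by exact_mod_cast hn
  exact hveq n ⟨x, hx⟩

lemma aux_I_II {X Z : Type*} [MetricSpace X] [MetricSpace Z]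
    (e : Z → Z → unitInterval → Z)
    (he : Continuous fun p : Z × Z × unitInterval => e p.1 p.2.1 p.2.2)
    (he0 : ∀ x y, e x y 0 = x) (he1 : ∀ x y, e x y 1 = y)
    (heid : ∀ x t, e x x t = x)
    (helip : ∀ z₁ z₂ : Z, ∃ K : ℝ≥0, LipschitzWith K (e z₁ z₂))
    (g : X → Z) (gs : ℕ → X → Z) (hgs : ∀ n, Continuous (gs n))
    (hst : ∀ x, ∃ N : ℕ, ∀ n ≥ N, gs n x = g x) :
    ∃ f : X → X → Z, (∀ x, f x x = g x) ∧
      (∀ y, Continuous fun x => f x y) ∧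
      (∀ x, ∃ K : ℝ≥0, LipschitzWith K (f x)) := by
  classical
  by_cases hX : Nonempty X
  swap
  · -- empty space : trivial
    rw [not_nonempty_iff] at hX
    refine ⟨fun x _ => g x, fun x => (hX.false x).elim, ?_, fun x => (hX.false x).elim⟩
    intro y
    rw [continuous_iff_continuousAt]
    exact fun x => (hX.false x).elim
  obtain ⟨xs⟩ := hX
  obtain ⟨N₀, hN₀⟩ := hst xs
  set hs : ℕ → X → Z := fun k => gs (k + N₀) with hhs
  have hscont : ∀ k, Continuous (hs k) := fun k => hgs _
  have hsst : ∀ x, ∃ N : ℕ, ∀ m, N ≤ m → hs m x = g x := by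
    intro x
    obtain ⟨N, hN⟩ := hst x
    exact ⟨N, fun m hm => hN _ (le_add_of_le_left hm)⟩
  set E : ℕ → Set X := fun k => {x | ∀ m, k ≤ m → hs m x = hs k x} with hE
  have hEmono : ∀ j k, j ≤ k → E j ⊆ E k := by
    intro j k hjk x hx m hm
    rw [hx m (hjk.trans hm), hx k hjk]
  have hEne : ∀ k, (E k).Nonempty := by
    intro k
    refine ⟨xs, hEmono 0 k (Nat.zero_le k) ?_⟩
    intro m _
    rw [hhs]
    simp only
    rw [hN₀ _ (Nat.le_add_left _ _), hN₀ _ (Nat.le_add_left _ _)]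
  set F : ℕ → Set X := fun k => closure (E k) with hF
  have hFc : ∀ k, IsClosed (F k) := fun k => isClosed_closure
  have hFne : ∀ k, (F k).Nonempty := fun k => (hEne k).closure
  have hFmono : ∀ j k, j ≤ k → F j ⊆ F k := fun j k h => closure_mono (hEmono j k h)
  have hFeq : ∀ k m, k ≤ m → ∀ x ∈ F k, hs m x = hs k x := by
    intro k m hkm x hx
    have hcl : IsClosed {x | hs m x = hs k x} := isClosed_eq (hscont m) (hscont k)
    have : F k ⊆ {x | hs m x = hs k x} :=
      closure_minimal (fun z hz => hz m hkm) hcl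
    exact this hx
  have hFg : ∀ k x, x ∈ F k → ∀ m, k ≤ m → hs m x = g x := by
    intro k x hx m hkm
    obtain ⟨N, hN⟩ := hsst x
    have h1 : hs (max N k) x = g x := hN _ (le_max_left _ _)
    have h2 : hs (max N k) x = hs k x := hFeq k _ (le_max_right _ _) x hx
    rw [hFeq k m hkm x hx, ← h2, h1]
  have hex : ∀ x, ∃ k, x ∈ F k := by
    intro x
    obtain ⟨N, hN⟩ := hsst x
    exact ⟨N, subset_closure (fun m hm => by rw [hN m hm, hN N le_rfl])⟩
  set n : X → ℕ := fun x => Nat.find (hex x) with hn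
  have hnF : ∀ x, x ∈ F (n x) := fun x => Nat.find_spec (hex x)
  have hnmin : ∀ x k, k < n x → x ∉ F k := fun x k hk => Nat.find_min (hex x) hk
  set φ : ℕ → X → ℝ := fun k x => infDist x (F k) with hφ
  have hφpos : ∀ x k, k < n x → 0 < φ k x := fun x k hk =>
    ((hFc k).notMem_iff_infDist_pos (hFne k)).mp (hnmin x k hk)
  have hφ0 : ∀ x k, n x ≤ k → φ k x = 0 := fun x k hk =>
    infDist_zero_of_mem (hFmono _ _ hk (hnF x))
  have hφnonneg : ∀ k x, 0 ≤ φ k x := fun k x => infDist_nonneg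
  have hφled : ∀ k x w, w ∈ F k → φ k x ≤ dist x w := fun k x w hw =>
    infDist_le_dist_of_mem hw
  set term : ℕ → X → X → ℝ := fun k x y => max (φ k x - dist x y) 0 / φ k x with hterm
  set σ : X → X → ℝ := fun x y => ∑ k ∈ Finset.range (n x), term k x y with hσ
  have t1 : ∀ k x y, 0 ≤ term k x y := by
    intro k x y
    apply div_nonneg (le_max_right _ _) (hφnonneg k x)
  have t3 : ∀ k x, 0 < φ k x → term k x x = 1 := by
    intro k x h
    rw [hterm]
    simp only [dist_self, sub_zero]
    rw [max_eq_left h.le, div_self h.ne']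
  have t4 : ∀ k x y, φ k x = 0 → term k x y = 0 := by
    intro k x y h
    rw [hterm]; simp only [h, div_zero]
  have t5 : ∀ k x y x₀, x₀ ∈ F k → dist x x₀ ≤ dist x y → term k x y = 0 := by
    intro k x y x₀ hx₀ hd
    have : φ k x - dist x y ≤ 0 := by
      have := hφled k x x₀ hx₀
      linarith
    rw [hterm]
    simp only [max_eq_right this, zero_div]
  have t6 : ∀ k x y y', |term k x y - term k x y'| ≤ (φ k x)⁻¹ * dist y y' := by
    intro k x y y'
    by_cases h : φ k x = 0
    · rw [t4 k x y h, t4 k x y' h, h]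
      simp [dist_nonneg]
    · have hpos : 0 < φ k x := (hφnonneg k x).lt_of_ne (Ne.symm h)
      rw [hterm]
      simp only
      rw [div_sub_div_same, abs_div, abs_of_pos hpos, div_eq_inv_mul]
      apply mul_le_mul_of_nonneg_left _ (inv_nonneg.mpr hpos.le)
      have step1 : |(φ k x - dist x y) ⊔ 0 - (φ k x - dist x y') ⊔ 0| ≤
          |(φ k x - dist x y) - (φ k x - dist x y')| := abs_max_sub_max_le_abs _ _ _
      have step2 : |(φ k x - dist x y) - (φ k x - dist x y')| = |dist x y' - dist x y| := by
        ring_nf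
      have step3 : |dist x y' - dist x y| ≤ dist y y' := by
        have h3 := abs_dist_sub_le y' y x
        rw [dist_comm y' x, dist_comm y x] at h3
        rw [dist_comm y y']
        exact h3
      calc |(φ k x - dist x y) ⊔ 0 - (φ k x - dist x y') ⊔ 0|
          ≤ |(φ k x - dist x y) - (φ k x - dist x y')| := step1
        _ = |dist x y' - dist x y| := step2
        _ ≤ dist y y' := step3
  have t7 : ∀ x, σ x x = n x := by
    intro x
    rw [hσ]
    simp only
    rw [Finset.sum_congr rfl (fun k hk => t3 k x (hφpos x k (Finset.mem_range.mp hk)))]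
    simp
  have t8 : ∀ x y, 0 ≤ σ x y := fun x y => Finset.sum_nonneg (fun k _ => t1 k x y)
  set Λ : X → ℝ := fun x => ∑ k ∈ Finset.range (n x), (φ k x)⁻¹ with hΛ
  have hΛnonneg : ∀ x, 0 ≤ Λ x :=
    fun x => Finset.sum_nonneg (fun k _ => inv_nonneg.mpr (hφnonneg k x))
  have hσlip : ∀ x y y', |σ x y - σ x y'| ≤ Λ x * dist y y' := by
    intro x y y'
    rw [hσ, hΛ]
    simp only
    rw [← Finset.sum_sub_distrib, Finset.sum_mul]
    refine (Finset.abs_sum_le_sum_abs _ _).trans (Finset.sum_le_sum ?_)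
    intro k _
    exact t6 k x y y'
  have hσcont : ∀ y x₀, ContinuousAt (fun x => σ x y) x₀ := by
    intro y x₀
    have key : ∃ r > (0:ℝ), ∀ x, dist x x₀ < r → ∀ k, n x₀ ≤ k → term k x y = 0 := by
      by_cases hy : y = x₀
      · refine ⟨1, one_pos, ?_⟩
        intro x _ k hk
        apply t5 k x y x₀ (hFmono _ _ hk (hnF x₀))
        rw [hy]
      · have hd0 : 0 < dist x₀ y := dist_pos.mpr (fun hc => hy hc.symm)
        refine ⟨dist x₀ y / 2, by linarith, ?_⟩
        intro x hx k hk
        apply t5 k x y x₀ (hFmono _ _ hk (hnF x₀))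
        have h1 : dist x₀ y ≤ dist x₀ x + dist x y := dist_triangle _ _ _
        rw [dist_comm x₀ x] at h1
        linarith
    obtain ⟨r, hr, hkey⟩ := key
    have hev : ∀ᶠ x in 𝓝 x₀, σ x y = ∑ k ∈ Finset.range (n x₀), term k x y := by
      filter_upwards [Metric.ball_mem_nhds x₀ hr] with x hx
      have hx' : dist x x₀ < r := mem_ball.mp hx
      rw [hσ]
      simp only
      have e1 : ∑ k ∈ Finset.range (n x), term k x y
          = ∑ k ∈ Finset.range (max (n x) (n x₀)), term k x y := by
        apply Finset.sum_subset (Finset.range_subset_range.mpr (le_max_left _ _))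
        intro k _ hk2
        exact t4 k x y (hφ0 x k (le_of_not_gt (fun hlt => hk2 (Finset.mem_range.mpr hlt))))
      have e2 : ∑ k ∈ Finset.range (n x₀), term k x y
          = ∑ k ∈ Finset.range (max (n x) (n x₀)), term k x y := by
        apply Finset.sum_subset (Finset.range_subset_range.mpr (le_max_right _ _))
        intro k _ hk2
        exact hkey x hx' k (le_of_not_gt (fun hlt => hk2 (Finset.mem_range.mpr hlt)))
      rw [e1, ← e2]
    have hfix : ContinuousAt (fun x => ∑ k ∈ Finset.range (n x₀), term k x y) x₀ := by
      apply tendsto_finset_sum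
      intro k hk
      have hkn : k < n x₀ := Finset.mem_range.mp hk
      have hnum : ContinuousAt (fun x => (φ k x - dist x y) ⊔ 0) x₀ := by
        have : Continuous (fun x : X => (infDist x (F k) - dist x y) ⊔ 0) :=
          ((continuous_infDist_pt (F k)).sub (continuous_id.dist continuous_const)).max
            continuous_const
        exact this.continuousAt
      have hden : ContinuousAt (fun x => φ k x) x₀ := (continuous_infDist_pt (F k)).continuousAt
      have := ContinuousAt.div hnum hden (hφpos x₀ k hkn).ne'
      exact this
    exact hfix.congr (Filter.eventuallyEq_of_mem hev (fun x hx => hx.symm))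
  -- the Lipschitz constants of the path pieces
  set Kch : ℕ → X → ℝ≥0 := fun k x => (helip (hs k x) (hs (k+1) x)).choose with hKch
  have hKch' : ∀ k x, LipschitzWith (Kch k x) (e (hs k x) (hs (k+1) x)) :=
    fun k x => (helip (hs k x) (hs (k+1) x)).choose_spec
  set C : X → ℝ≥0 := fun x => (Finset.range (n x)).sup (fun k => Kch k x) with hC
  set proj01 : ℝ → unitInterval := Set.projIcc (0:ℝ) 1 zero_le_one with hproj
  have hproj0 : proj01 0 = 0 := by
    rw [hproj]; simp [Set.projIcc]
  have hproj1 : proj01 1 = 1 := by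
    rw [hproj]; simp [Set.projIcc]
  set Φ : X → ℝ → Z := fun x u => e (hs ⌊u⌋₊ x) (hs (⌊u⌋₊+1) x) (proj01 (u - ⌊u⌋₊)) with hΦ
  set path : ℕ → X → ℝ → Z := fun k x u => e (hs k x) (hs (k+1) x) (proj01 (u - k)) with hpath
  have hpath_eq : ∀ (k : ℕ) (x : X) (u : ℝ), (k:ℝ) ≤ u → u ≤ (k:ℝ)+1 → Φ x u = path k x u := by
    intro k x u hku hku1
    rcases lt_or_eq_of_le hku1 with hlt | heq
    · have hfloor : ⌊u⌋₊ = k := by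
        rw [Nat.floor_eq_iff (le_trans (Nat.cast_nonneg k) hku)]
        exact ⟨hku, hlt⟩
      rw [hΦ, hpath]
      simp only [hfloor]
    · rw [hΦ, hpath]
      simp only
      have hfloor : ⌊u⌋₊ = k + 1 := by
        rw [heq]
        rw [show ((k:ℝ)+1) = ((k+1 : ℕ) : ℝ) by push_cast; ring]
        exact Nat.floor_natCast _
      rw [hfloor, heq]
      have ha : ((k:ℝ) + 1 - ((k+1 : ℕ):ℝ)) = 0 := by push_cast; ring
      have hb : ((k:ℝ) + 1 - (k:ℝ)) = 1 := by ring
      rw [ha, hb, hproj0, hproj1, he0, he1]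
  have hpiece : ∀ (x : X) (k : ℕ) (u v : ℝ), (k:ℝ) ≤ u → u ≤ (k:ℝ)+1 → (k:ℝ) ≤ v → v ≤ (k:ℝ)+1 →
      dist (Φ x u) (Φ x v) ≤ (C x : ℝ) * |u - v| := by
    intro x k u v hu1 hu2 hv1 hv2
    rw [hpath_eq k x u hu1 hu2, hpath_eq k x v hv1 hv2]
    by_cases hk : k < n x
    · have h1 : dist (path k x u) (path k x v)
          ≤ (Kch k x : ℝ) * dist (proj01 (u - k)) (proj01 (v - k)) := by
        rw [hpath]
        exact (hKch' k x).dist_le_mul _ _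
      have h2 : dist (proj01 (u - (k:ℝ))) (proj01 (v - (k:ℝ))) ≤ |u - v| := by
        have h2' := (LipschitzWith.projIcc (zero_le_one (α := ℝ))).dist_le_mul
          (u - (k:ℝ)) (v - (k:ℝ))
        rw [hproj]
        have h3 : dist (u - (k:ℝ)) (v - (k:ℝ)) = |u - v| := by
          rw [Real.dist_eq]; ring_nf
        rw [h3] at h2'
        simpa using h2'
      have h4 : (Kch k x : ℝ) ≤ (C x : ℝ) := by
        rw [hC]
        exact_mod_cast Finset.le_sup (f := fun k => Kch k x) (Finset.mem_range.mpr hk)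
      calc dist (path k x u) (path k x v)
          ≤ (Kch k x : ℝ) * dist (proj01 (u - k)) (proj01 (v - k)) := h1
        _ ≤ (Kch k x : ℝ) * |u - v| :=
            mul_le_mul_of_nonneg_left h2 (Kch k x).coe_nonneg
        _ ≤ (C x : ℝ) * |u - v| := mul_le_mul_of_nonneg_right h4 (abs_nonneg _)
    · push_neg at hk
      have ha : hs k x = g x := hFg (n x) x (hnF x) k hk
      have hb : hs (k+1) x = g x := hFg (n x) x (hnF x) (k+1) (hk.trans (Nat.le_succ k))
      rw [hpath]
      simp only [ha, hb, heid, dist_self]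
      positivity
  have hglue : ∀ x (u v : ℝ), 0 ≤ u → u ≤ v → dist (Φ x u) (Φ x v) ≤ (C x : ℝ) * (v - u) := by
    intro x u v hu huv
    have main : ∀ N : ℕ, ∀ u v : ℝ, 0 ≤ u → u ≤ v → v ≤ (N:ℝ) →
        dist (Φ x u) (Φ x v) ≤ (C x : ℝ) * (v - u) := by
      intro N
      induction N with
      | zero =>
        intro u v h0 huv hvN
        have huv' : u = v := le_antisymm huv (hvN.trans (by exact_mod_cast h0))
        rw [huv']
        simp
      | succ N ih =>
        intro u v h0 huv hvN
        by_cases hvN' : v ≤ (N:ℝ)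
        · exact ih u v h0 huv hvN'
        · push_neg at hvN'
          have hvN2 : v ≤ (N:ℝ) + 1 := by
            have : ((N+1:ℕ):ℝ) = (N:ℝ)+1 := by push_cast; ring
            rw [← this]; exact_mod_cast hvN
          by_cases huN : (N:ℝ) ≤ u
          · have := hpiece x N u v huN (le_trans huv hvN2) hvN'.le hvN2
            rw [abs_of_nonpos (sub_nonpos.mpr huv)] at this
            calc dist (Φ x u) (Φ x v) ≤ (C x : ℝ) * (-(u - v)) := this
              _ = (C x : ℝ) * (v - u) := by ring
          · push_neg at huN
            have step1 : dist (Φ x u) (Φ x (N:ℝ)) ≤ (C x : ℝ) * ((N:ℝ) - u) :=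
              ih u (N:ℝ) h0 huN.le le_rfl
            have step2 : dist (Φ x (N:ℝ)) (Φ x v) ≤ (C x : ℝ) * (v - (N:ℝ)) := by
              have := hpiece x N (N:ℝ) v le_rfl (by linarith) hvN'.le hvN2
              rw [abs_of_nonpos (by linarith : (N:ℝ) - v ≤ 0)] at this
              calc dist (Φ x (N:ℝ)) (Φ x v) ≤ (C x : ℝ) * (-((N:ℝ) - v)) := this
                _ = (C x : ℝ) * (v - (N:ℝ)) := by ring
            calc dist (Φ x u) (Φ x v)
                ≤ dist (Φ x u) (Φ x (N:ℝ)) + dist (Φ x (N:ℝ)) (Φ x v) := dist_triangle _ _ _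
              _ ≤ (C x : ℝ) * ((N:ℝ) - u) + (C x : ℝ) * (v - (N:ℝ)) := add_le_add step1 step2
              _ = (C x : ℝ) * (v - u) := by ring
    exact main ⌈v⌉₊ u v hu huv (Nat.le_ceil v)
  refine ⟨fun x y => Φ x (σ x y), ?_, ?_, ?_⟩
  · -- diagonal
    intro x
    show Φ x (σ x x) = g x
    rw [t7]
    rw [hΦ]
    simp only [Nat.floor_natCast, sub_self, hproj0, he0]
    exact hFg (n x) x (hnF x) (n x) le_rfl
  · -- continuity in x
    intro y
    rw [continuous_iff_continuousAt]
    intro x₀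
    have hσc := hσcont y x₀
    have hu₀ : 0 ≤ σ x₀ y := t8 x₀ y
    obtain ⟨m, hmdef⟩ : ∃ m, ⌊σ x₀ y⌋₊ = m := ⟨_, rfl⟩
    have hm1 : (m:ℝ) ≤ σ x₀ y := by rw [← hmdef]; exact Nat.floor_le hu₀
    have hm2 : σ x₀ y < (m:ℝ)+1 := by rw [← hmdef]; exact Nat.lt_floor_add_one _
    have hPathCont : ∀ k : ℕ, ContinuousAt (fun x => path k x (σ x y)) x₀ := by
      intro k
      rw [hpath]
      simp only
      have hc : ContinuousAt
          (fun x => ((hs k x, hs (k+1) x, proj01 (σ x y - k)) : Z × Z × unitInterval)) x₀ := by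
        apply ContinuousAt.prodMk ((hscont k).continuousAt)
        apply ContinuousAt.prodMk ((hscont (k+1)).continuousAt)
        exact (continuous_projIcc.continuousAt).comp (hσc.sub continuousAt_const)
      exact (he.continuousAt).comp hc
    show ContinuousAt (fun x => Φ x (σ x y)) x₀
    by_cases hlt : (m:ℝ) < σ x₀ y
    · apply (hPathCont m).congr
      filter_upwards [hσc.preimage_mem_nhds (Ioo_mem_nhds hlt hm2)] with x hx
      exact (hpath_eq m x (σ x y) hx.1.le hx.2.le).symm
    · have hu₀m : σ x₀ y = (m:ℝ) := le_antisymm (not_lt.mp hlt) hm1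
      rcases Nat.eq_zero_or_pos m with hm0 | hmpos
      · -- m = 0 : eventually σ ∈ [0,1)
        apply (hPathCont 0).congr
        have h01 : σ x₀ y < (0:ℝ) + 1 := by rw [hu₀m, hm0]; norm_num
        filter_upwards [hσc.preimage_mem_nhds (Iio_mem_nhds h01)] with x hx
        have h1 : (0:ℝ) ≤ σ x y := t8 x y
        have hx' : σ x y < (0:ℝ) + 1 := by simpa using hx
        exact (hpath_eq 0 x (σ x y) (by exact_mod_cast h1) (by push_cast; linarith)).symm
      · -- m ≥ 1
        obtain ⟨m', rfl⟩ : ∃ m', m = m' + 1 := ⟨m - 1, (Nat.succ_pred_eq_of_pos hmpos).symm⟩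
        have hsplit : {x | σ x y < ((m'+1 : ℕ):ℝ)} ∪ {x | ((m'+1:ℕ):ℝ) ≤ σ x y} = univ := by
          ext x; simp [lt_or_ge]
        rw [← continuousWithinAt_univ, ← hsplit]
        apply ContinuousWithinAt.union
        · -- below: use path m'
          apply ((hPathCont m').continuousWithinAt).congr_of_eventuallyEq
          · have hlow : ((m':ℝ)) < σ x₀ y := by
              rw [hu₀m]; push_cast; linarith
            filter_upwards [nhdsWithin_le_nhds (hσc.preimage_mem_nhds (Ioi_mem_nhds hlow)),
              self_mem_nhdsWithin] with x hx1 hx2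
            have hx2' : σ x y < ((m'+1:ℕ):ℝ) := hx2
            apply hpath_eq m' x (σ x y) (le_of_lt hx1)
            push_cast at hx2' ⊢
            linarith
          · apply hpath_eq m' x₀ (σ x₀ y)
            · rw [hu₀m]; push_cast; linarith
            · rw [hu₀m]; push_cast; linarith
        · -- above: use path (m'+1)
          apply ((hPathCont (m'+1)).continuousWithinAt).congr_of_eventuallyEq
          · have hhigh : σ x₀ y < ((m'+1:ℕ):ℝ) + 1 := by
              rw [hu₀m]; push_cast; linarith
            filter_upwards [nhdsWithin_le_nhds (hσc.preimage_mem_nhds (Iio_mem_nhds hhigh)),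
              self_mem_nhdsWithin] with x hx1 hx2
            exact hpath_eq (m'+1) x (σ x y) hx2 (le_of_lt hx1)
          · apply hpath_eq (m'+1) x₀ (σ x₀ y)
            · rw [hu₀m]
            · rw [hu₀m]; push_cast; linarith
  · -- Lipschitz in y
    intro x
    refine ⟨Real.toNNReal ((C x : ℝ) * Λ x), ?_⟩
    apply LipschitzWith.of_dist_le_mul
    intro y y'
    have key : ∀ w w' : X, σ x w ≤ σ x w' →
        dist (Φ x (σ x w)) (Φ x (σ x w')) ≤ (C x : ℝ) * Λ x * dist w w' := by
      intro w w' hw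
      calc dist (Φ x (σ x w)) (Φ x (σ x w')) ≤ (C x : ℝ) * (σ x w' - σ x w) :=
            hglue x _ _ (t8 x w) hw
        _ ≤ (C x : ℝ) * (Λ x * dist w w') := by
            apply mul_le_mul_of_nonneg_left _ (C x).coe_nonneg
            have h1 := hσlip x w' w
            rw [dist_comm w' w] at h1
            calc σ x w' - σ x w ≤ |σ x w' - σ x w| := le_abs_self _
              _ ≤ Λ x * dist w w' := h1
        _ = (C x : ℝ) * Λ x * dist w w' := by ring
    have hcoe : (Real.toNNReal ((C x : ℝ) * Λ x) : ℝ) = (C x : ℝ) * Λ x :=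
      Real.coe_toNNReal _ (mul_nonneg (C x).coe_nonneg (hΛnonneg x))
    rw [hcoe]
    rcases le_total (σ x y) (σ x y') with h | h
    · exact key y y' h
    · rw [dist_comm y y', dist_comm (Φ x (σ x y)) (Φ x (σ x y'))]
      exact key y' y h


/-- Theorem 4.6: for a metric space `X` and a metric equiconnected space `(Z, e)` with
`e` Lipschitz in the third variable and `Z` an absolute extensor for `X`, a mapping
`g : X → Z` is of the stable first Baire class iff it is the diagonal of a mapping
`f : X² → Z` continuous in the first variable and Lipschitz in the second one, iff it is
the diagonal of a mapping `f : X² → Z` continuous in the first variable and pointwise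
Lipschitz in the second variable at every point of the diagonal. -/
theorem stmt_11 {X Z : Type*} [MetricSpace X] [MetricSpace Z]
    (e : Z → Z → unitInterval → Z)
    (he : Continuous fun p : Z × Z × unitInterval => e p.1 p.2.1 p.2.2)
    (he0 : ∀ x y, e x y 0 = x) (he1 : ∀ x y, e x y 1 = y)
    (heid : ∀ x t, e x x t = x)
    (helip : ∀ z₁ z₂ : Z, ∃ K : ℝ≥0, LipschitzWith K (e z₁ z₂))
    (hAE : ∀ A : Set X, IsClosed A → ∀ u : A → Z, Continuous u →
      ∃ v : X → Z, Continuous v ∧ ∀ a : A, v a = u a)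
    (g : X → Z) :
    ((∃ gs : ℕ → X → Z, (∀ n, Continuous (gs n)) ∧
        ∀ x, ∃ N : ℕ, ∀ n ≥ N, gs n x = g x) ↔
      (∃ f : X → X → Z, (∀ x, f x x = g x) ∧
        (∀ y, Continuous fun x => f x y) ∧
        (∀ x, ∃ K : ℝ≥0, LipschitzWith K (f x)))) ∧
    ((∃ f : X → X → Z, (∀ x, f x x = g x) ∧
        (∀ y, Continuous fun x => f x y) ∧
        (∀ x, ∃ K : ℝ≥0, LipschitzWith K (f x))) ↔
      (∃ f : X → X → Z, (∀ x, f x x = g x) ∧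
        (∀ y, Continuous fun x => f x y) ∧
        (∀ x₀, ∃ C : ℝ, ∀ y, dist (f x₀ y) (f x₀ x₀) ≤ C * dist y x₀))) := by
  have hII_III : (∃ f : X → X → Z, (∀ x, f x x = g x) ∧
        (∀ y, Continuous fun x => f x y) ∧
        (∀ x, ∃ K : ℝ≥0, LipschitzWith K (f x))) →
      (∃ f : X → X → Z, (∀ x, f x x = g x) ∧
        (∀ y, Continuous fun x => f x y) ∧
        (∀ x₀, ∃ C : ℝ, ∀ y, dist (f x₀ y) (f x₀ x₀) ≤ C * dist y x₀)) := by
    rintro ⟨f, hd, hc, hl⟩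
    refine ⟨f, hd, hc, ?_⟩
    intro x₀
    obtain ⟨K, hK⟩ := hl x₀
    exact ⟨(K : ℝ), fun y => hK.dist_le_mul y x₀⟩
  constructor
  · constructor
    · rintro ⟨gs, h1, h2⟩
      exact aux_I_II e he he0 he1 heid helip g gs h1 h2
    · intro hII
      obtain ⟨f, hd, hc, hp⟩ := hII_III hII
      exact aux_III_I hAE g f hd hc hp
  · constructor
    · exact hII_III
    · rintro ⟨f, hd, hc, hp⟩
      obtain ⟨gs, h1, h2⟩ := aux_III_I hAE g f hd hc hp
      exact aux_I_II e he he0 he1 heid helip g gs h1 h2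
end

section
/- Let X be a normed space whose norm is Fréchet differentiable at every nonzero point, and let (H_n)_{n≥1} be a sequence of open subsets of X² such that the diagonal Δ = {(x,x) : x ∈ X} is contained in H_n for every n ≥ 1. Then there exist a sequence (G_n)_{n≥1} of open subsets of X² and a sequence (φ_n : X² → [0,1])_{n≥1} of jointly continuous functions, each of which is Lipschitz and Fréchet differentiable with respect to the second variable (i.e. for every fixed x ∈ X the map y ↦ φ_n(x,y) is Lipschitz and Fréchet differentiable), such that: (1) Δ ⊆ G_{n+1} ⊆ closure(G_{n+1}) ⊆ G_n ⊆ H_n for every n ≥ 1; (2) X² \ G_n ⊆ φ_n^{-1}(0) and closure(G_{n+1}) ⊆ φ_n^{-1}(1) for every n ≥ 1. -/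
open Set Filter Topology NNReal

private lemma smoothTransition_exists_lip : ∃ K : ℝ≥0, LipschitzWith K Real.smoothTransition := by
  have hdiff : Differentiable ℝ Real.smoothTransition :=
    fun t => (Real.smoothTransition.contDiffAt (n := 1)).differentiableAt (by norm_num)
  have hderivc : Continuous (deriv Real.smoothTransition) :=
    (Real.smoothTransition.contDiff (n := 1)).continuous_deriv le_rfl
  have hzero : ∀ x : ℝ, x ∉ Icc (0:ℝ) 1 → deriv Real.smoothTransition x = 0 := by
    intro x hx
    rcases not_and_or.1 hx with hx0 | hx1
    · push_neg at hx0
      have hev : Real.smoothTransition =ᶠ[𝓝 x] fun _ => (0:ℝ) :=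
        eventually_of_mem (Iio_mem_nhds hx0) fun y hy =>
          Real.smoothTransition.zero_of_nonpos hy.le
      rw [hev.deriv_eq, deriv_const]
    · push_neg at hx1
      have hev : Real.smoothTransition =ᶠ[𝓝 x] fun _ => (1:ℝ) :=
        eventually_of_mem (Ioi_mem_nhds hx1) fun y hy =>
          Real.smoothTransition.one_of_one_le hy.le
      rw [hev.deriv_eq, deriv_const]
  have hsupp : HasCompactSupport (deriv Real.smoothTransition) :=
    HasCompactSupport.intro isCompact_Icc hzero
  obtain ⟨C, hC⟩ := hsupp.exists_bound_of_continuous hderivc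
  refine ⟨⟨max C 0, le_max_right _ _⟩, lipschitzWith_of_nnnorm_deriv_le hdiff fun x => ?_⟩
  refine NNReal.coe_le_coe.1 ?_; rw [coe_nnnorm]
  exact (hC x).trans (le_max_left _ _)

open Classical in
private noncomputable def gAux {X : Type*} [NormedAddCommGroup X]
    (H : ℕ → Set (X × X)) (n : ℕ) (x : X) : ℝ :=
  if ((H n)ᶜ).Nonempty then min 1 (Metric.infDist (x, x) (H n)ᶜ) else 1

private noncomputable def rAux {X : Type*} [NormedAddCommGroup X]
    (H : ℕ → Set (X × X)) : ℕ → X → ℝ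
  | 0 => gAux H 0
  | (n+1) => fun x => min (rAux H n x) (gAux H (n+1) x)

private noncomputable def rhoAux {X : Type*} [NormedAddCommGroup X]
    (H : ℕ → Set (X × X)) (n : ℕ) (x : X) : ℝ :=
  (2:ℝ)⁻¹ ^ n * rAux H n x

section aux
variable {X : Type*} [NormedAddCommGroup X] {H : ℕ → Set (X × X)}

private lemma gAux_cont (n : ℕ) : Continuous (gAux H n) := by
  unfold gAux
  split_ifs
  · exact continuous_const.min
      (Metric.continuous_infDist_pt _ |>.comp (continuous_id.prodMk continuous_id))
  · exact continuous_const

private lemma gAux_pos (hHopen : ∀ n, IsOpen (H n)) (hΔ : ∀ n, ∀ x : X, (x, x) ∈ H n)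
    (n : ℕ) (x : X) : 0 < gAux H n x := by
  unfold gAux
  split_ifs with h
  · refine lt_min one_pos ?_
    exact ((hHopen n).isClosed_compl.notMem_iff_infDist_pos h).1 (by simp [hΔ n x])
  · exact one_pos

private lemma gAux_sub (n : ℕ) (p : X × X) (hp : ‖p.2 - p.1‖ < gAux H n p.1) : p ∈ H n := by
  by_contra hcon
  have hne : ((H n)ᶜ).Nonempty := ⟨p, hcon⟩
  rw [gAux, if_pos hne] at hp
  have h1 : Metric.infDist (p.1, p.1) (H n)ᶜ ≤ dist (p.1, p.1) p :=
    Metric.infDist_le_dist_of_mem hcon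
  have h2 : dist ((p.1 : X), (p.1 : X)) p = ‖p.2 - p.1‖ := by
    rw [Prod.dist_eq]
    simp [dist_eq_norm, norm_sub_rev]
  rw [h2] at h1
  exact absurd (lt_of_lt_of_le (hp.trans_le (min_le_right _ _)) h1) (lt_irrefl _)

private lemma rAux_cont (n : ℕ) : Continuous (rAux H n) := by
  induction n with
  | zero => exact gAux_cont 0
  | succ k ih => exact ih.min (gAux_cont (k+1))

private lemma rAux_pos (hHopen : ∀ n, IsOpen (H n)) (hΔ : ∀ n, ∀ x : X, (x, x) ∈ H n)
    (n : ℕ) (x : X) : 0 < rAux H n x := by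
  induction n with
  | zero => exact gAux_pos hHopen hΔ 0 x
  | succ k ih => exact lt_min ih (gAux_pos hHopen hΔ (k+1) x)

private lemma rAux_le_gAux (n : ℕ) (x : X) : rAux H n x ≤ gAux H n x := by
  cases n with
  | zero => exact le_rfl
  | succ k => exact min_le_right _ _

private lemma rAux_antitone (n : ℕ) (x : X) : rAux H (n+1) x ≤ rAux H n x := min_le_left _ _

private lemma rhoAux_cont (n : ℕ) : Continuous (rhoAux H n) :=
  continuous_const.mul (rAux_cont n)

private lemma rhoAux_pos (hHopen : ∀ n, IsOpen (H n)) (hΔ : ∀ n, ∀ x : X, (x, x) ∈ H n)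
    (n : ℕ) (x : X) : 0 < rhoAux H n x :=
  mul_pos (by positivity) (rAux_pos hHopen hΔ n x)

private lemma rhoAux_le_gAux (hHopen : ∀ n, IsOpen (H n)) (hΔ : ∀ n, ∀ x : X, (x, x) ∈ H n)
    (n : ℕ) (x : X) : rhoAux H n x ≤ gAux H n x := by
  have h0 : 0 ≤ rAux H n x := (rAux_pos hHopen hΔ n x).le
  have h1 : (2:ℝ)⁻¹ ^ n ≤ 1 := pow_le_one₀ (by norm_num) (by norm_num)
  calc rhoAux H n x ≤ 1 * rAux H n x := mul_le_mul_of_nonneg_right h1 h0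
  _ = rAux H n x := one_mul _
  _ ≤ gAux H n x := rAux_le_gAux n x

private lemma rhoAux_lt (hHopen : ∀ n, IsOpen (H n)) (hΔ : ∀ n, ∀ x : X, (x, x) ∈ H n)
    (n : ℕ) (x : X) : rhoAux H (n+1) x < rhoAux H n x := by
  have h1 : (0:ℝ) < (2:ℝ)⁻¹ ^ n := by positivity
  have h2 := rAux_pos hHopen hΔ n x
  have h3 := rAux_antitone (H := H) n x
  have h4 : (0:ℝ) < rAux H (n+1) x := rAux_pos hHopen hΔ (n+1) x
  unfold rhoAux
  rw [pow_succ]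
  nlinarith

end aux

/-- Lemma 7.1: for a normed space `X` whose norm is Fréchet differentiable at every
nonzero point and a sequence of open sets `H n ⊆ X²` containing the diagonal, there
exist open sets `G n` and jointly continuous functions `φ n : X² → [0,1]`, Lipschitz and
Fréchet differentiable in the second variable, satisfying conditions (1) and (2). -/
theorem stmt_12 {X : Type*} [NormedAddCommGroup X] [NormedSpace ℝ X]
    (hnorm : ∀ x : X, x ≠ 0 → DifferentiableAt ℝ (fun y : X => ‖y‖) x)
    (H : ℕ → Set (X × X)) (hHopen : ∀ n, IsOpen (H n))
    (hΔ : ∀ n, ∀ x : X, (x, x) ∈ H n) :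
    ∃ (G : ℕ → Set (X × X)) (φ : ℕ → X × X → ℝ),
      (∀ n, IsOpen (G n)) ∧
      (∀ n p, φ n p ∈ Icc (0 : ℝ) 1) ∧
      (∀ n, Continuous (φ n)) ∧
      (∀ n x, ∃ K : ℝ≥0, LipschitzWith K fun y => φ n (x, y)) ∧
      (∀ n x, Differentiable ℝ fun y => φ n (x, y)) ∧
      -- condition (1)
      (∀ n, (∀ x : X, (x, x) ∈ G (n + 1)) ∧ G (n + 1) ⊆ closure (G (n + 1)) ∧
        closure (G (n + 1)) ⊆ G n ∧ G n ⊆ H n) ∧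
      -- condition (2)
      (∀ n, (G n)ᶜ ⊆ {p | φ n p = 0} ∧ closure (G (n + 1)) ⊆ {p | φ n p = 1}) := by
  classical
  set ρ : ℕ → X → ℝ := rhoAux H with hρdef
  have ρpos : ∀ n x, 0 < ρ n x := rhoAux_pos hHopen hΔ
  have ρlt : ∀ n x, ρ (n+1) x < ρ n x := rhoAux_lt hHopen hΔ
  have ρcont : ∀ n, Continuous (ρ n) := fun n => rhoAux_cont n
  set G : ℕ → Set (X × X) := fun n => {p | ‖p.2 - p.1‖ < ρ n p.1} with hGdef
  set φ : ℕ → X × X → ℝ := fun n p =>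
    Real.smoothTransition ((ρ n p.1 - ‖p.2 - p.1‖) / (ρ n p.1 - ρ (n+1) p.1)) with hφdef
  have cpos : ∀ n x, 0 < ρ n x - ρ (n+1) x := fun n x => sub_pos.2 (ρlt n x)
  -- closure of G(n+1) lands in the closed tube
  have hclos : ∀ n, closure (G (n+1)) ⊆ {p : X × X | ‖p.2 - p.1‖ ≤ ρ (n+1) p.1} := by
    intro n
    apply closure_minimal
    · intro p hp; exact le_of_lt (show ‖p.2 - p.1‖ < ρ (n+1) p.1 from hp)
    · have : IsClosed {p : X × X | ‖p.2 - p.1‖ - ρ (n+1) p.1 ≤ 0} := by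
        apply isClosed_le
        · exact ((continuous_snd.sub continuous_fst).norm).sub ((ρcont (n+1)).comp continuous_fst)
        · exact continuous_const
      convert this using 1
      ext p; simp [sub_nonpos]
  refine ⟨G, φ, ?_, ?_, ?_, ?_, ?_, ?_, ?_⟩
  · -- open
    intro n
    have : G n = (fun p : X × X => ‖p.2 - p.1‖ - ρ n p.1) ⁻¹' Iio 0 := by
      ext p; simp [hGdef, sub_neg]
    rw [this]
    exact IsOpen.preimage
      (((continuous_snd.sub continuous_fst).norm).sub ((ρcont n).comp continuous_fst))
      isOpen_Iio
  · -- range in [0,1]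
    intro n p
    exact ⟨Real.smoothTransition.nonneg _, Real.smoothTransition.le_one _⟩
  · -- joint continuity
    intro n
    apply Real.smoothTransition.continuous.comp
    apply Continuous.div
    · exact ((ρcont n).comp continuous_fst).sub ((continuous_snd.sub continuous_fst).norm)
    · exact ((ρcont n).comp continuous_fst).sub ((ρcont (n+1)).comp continuous_fst)
    · intro p; exact ne_of_gt (cpos n p.1)
  · -- Lipschitz in second variable
    intro n x
    obtain ⟨K, hK⟩ := smoothTransition_exists_lip
    set c : ℝ := ρ n x - ρ (n+1) x with hc
    have hcpos := cpos n x
    have hinner : LipschitzWith (Real.toNNReal c⁻¹)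
        (fun y : X => (ρ n x - ‖y - x‖) / c) := by
      apply LipschitzWith.of_dist_le_mul
      intro y z
      have h1 : dist ((ρ n x - ‖y - x‖) / c) ((ρ n x - ‖z - x‖) / c)
          = |‖z - x‖ - ‖y - x‖| / c := by
        rw [Real.dist_eq, div_sub_div_same, abs_div, abs_of_pos hcpos, ← hc]
        ring_nf
      rw [h1, Real.coe_toNNReal _ (by positivity), dist_eq_norm]
      rw [div_le_iff₀ hcpos]
      have h2 : |‖z - x‖ - ‖y - x‖| ≤ ‖z - y‖ := by
        have := abs_norm_sub_norm_le (z - x) (y - x)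
        simpa using this
      calc |‖z - x‖ - ‖y - x‖| ≤ ‖z - y‖ := h2
        _ = ‖y - z‖ := norm_sub_rev _ _
        _ = c⁻¹ * ‖y - z‖ * c := by rw [mul_comm c⁻¹, mul_assoc, inv_mul_cancel₀ (show c ≠ 0 from hcpos.ne'), mul_one]
    exact ⟨K * Real.toNNReal c⁻¹, hK.comp hinner⟩
  · -- differentiability in second variable
    intro n x y
    by_cases hxy : y = x
    · -- locally constant 1 near x
      subst hxy
      have hev : (fun z : X => φ n (y, z)) =ᶠ[𝓝 y] fun _ => (1:ℝ) := by
        have hball : Metric.ball y (ρ (n+1) y) ∈ 𝓝 y :=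
          Metric.ball_mem_nhds y (ρpos (n+1) y)
        refine eventually_of_mem hball fun z hz => ?_
        have hz' : ‖z - y‖ < ρ (n+1) y := by
          rwa [Metric.mem_ball, dist_eq_norm] at hz
        apply Real.smoothTransition.one_of_one_le
        rw [le_div_iff₀ (cpos n y)]
        simp only
        linarith
      exact hev.differentiableAt_iff.2 (differentiableAt_const 1)
    · have hn : y - x ≠ 0 := sub_ne_zero.2 hxy
      have hnorm' : DifferentiableAt ℝ (fun z : X => ‖z - x‖) y := by
        have h1 : DifferentiableAt ℝ (fun z : X => z - x) y :=
          (differentiable_id.sub_const x) y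
        exact (hnorm (y - x) hn).comp y h1
      have hinner : DifferentiableAt ℝ
          (fun z : X => (ρ n x - ‖z - x‖) / (ρ n x - ρ (n+1) x)) y := by
        simp only [div_eq_mul_inv]
        exact ((differentiableAt_const _).sub hnorm').mul_const _
      exact ((Real.smoothTransition.contDiffAt (n := 1)).differentiableAt (by norm_num)).comp y hinner
  · -- condition (1)
    intro n
    refine ⟨?_, subset_closure, ?_, ?_⟩
    · intro x; simp [hGdef, ρpos (n+1) x]
    · intro p hp
      have h1 := hclos n hp
      exact lt_of_le_of_lt h1 (ρlt n p.1)
    · intro p hp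
      exact gAux_sub n p (lt_of_lt_of_le hp (rhoAux_le_gAux hHopen hΔ n p.1))
  · -- condition (2)
    intro n
    constructor
    · intro p hp
      have hp' : ρ n p.1 ≤ ‖p.2 - p.1‖ := not_lt.1 hp
      show φ n p = 0
      apply Real.smoothTransition.zero_of_nonpos
      apply div_nonpos_of_nonpos_of_nonneg
      · linarith
      · exact (cpos n p.1).le
    · intro p hp
      have h1 := hclos n hp
      show φ n p = 1
      apply Real.smoothTransition.one_of_one_le
      rw [le_div_iff₀ (cpos n p.1)]
      simp only [Set.mem_setOf_eq] at h1
      linarith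
end

section
/- Let X be a normed space whose norm is Fréchet differentiable at every nonzero point, let Z be a normed space, and let g : X → Z be a mapping. Then the following are equivalent: (i) g is of the stable first Baire class; (ii) there exists a mapping f : X² → Z with diagonal g such that for every fixed y ∈ X the map x ↦ f(x,y) is continuous, and for every fixed x ∈ X the map y ↦ f(x,y) is Lipschitz and Fréchet differentiable; (iii) there exists a mapping f : X² → Z with diagonal g such that for every fixed y ∈ X the map x ↦ f(x,y) is continuous, and for every x₀ ∈ X the map y ↦ f(x₀,y) is pointwise Lipschitz at the point x₀. -/
open Set Filter Topology NNReal

open Metric in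
lemma exists_tau : ∃ τ : ℝ → ℝ, (∀ t : ℝ, t ≤ 1 → τ t = 1) ∧ (∀ t : ℝ, 2 ≤ t → τ t = 0) ∧
    (∀ t, 0 ≤ τ t) ∧ (∀ t, τ t ≤ 1) ∧ Differentiable ℝ τ ∧ ∃ L : ℝ≥0, LipschitzWith L τ := by
  set τ : ℝ → ℝ := fun t => 1 - Real.smoothTransition (t - 1) with hτ
  have hcd : ContDiff ℝ 1 τ :=
    contDiff_const.sub (Real.smoothTransition.contDiff.comp (contDiff_id.sub contDiff_const))
  have hdiff : Differentiable ℝ τ := hcd.differentiable one_ne_zero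
  have h1 : ∀ t : ℝ, t ≤ 1 → τ t = 1 := fun t ht => by
    simp [hτ, Real.smoothTransition.zero_of_nonpos (by linarith : t - 1 ≤ 0)]
  have h0 : ∀ t : ℝ, 2 ≤ t → τ t = 0 := fun t ht => by
    simp [hτ, Real.smoothTransition.one_of_one_le (by linarith : (1:ℝ) ≤ t - 1)]
  have hderiv0 : ∀ t : ℝ, t ∉ Icc (1:ℝ) 2 → deriv τ t = 0 := by
    intro t ht
    rcases lt_or_ge t 1 with h | h'
    · 
      have : τ =ᶠ[𝓝 t] fun _ => (1:ℝ) :=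
        eventually_of_mem (Iio_mem_nhds h) fun s hs => h1 s (le_of_lt hs)
      rw [this.deriv_eq, deriv_const]
    · have h : 2 < t := by
        rcases lt_or_ge 2 t with h2 | h2
        · exact h2
        · exact absurd ⟨h', h2⟩ ht
      have : τ =ᶠ[𝓝 t] fun _ => (0:ℝ) :=
        eventually_of_mem (Ioi_mem_nhds h) fun s hs => h0 s (le_of_lt hs)
      rw [this.deriv_eq, deriv_const]
  have hderivcont : Continuous (deriv τ) := hcd.continuous_deriv le_rfl
  obtain ⟨C, hC⟩ := (isCompact_Icc (a := (1:ℝ)) (b := 2)).exists_bound_of_continuousOn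
    hderivcont.continuousOn
  have hbound : ∀ t : ℝ, ‖deriv τ t‖₊ ≤ (max C 0).toNNReal := by
    intro t
    rw [← NNReal.coe_le_coe]
    simp only [coe_nnnorm, Real.coe_toNNReal', max_assoc, max_self]
    by_cases h : t ∈ Icc (1:ℝ) 2
    · exact le_max_of_le_left (hC t h)
    · rw [hderiv0 t h]; simp
  refine ⟨τ, h1, h0, fun t => by simp [hτ, Real.smoothTransition.le_one],
    fun t => by simp [hτ, Real.smoothTransition.nonneg], hdiff,
    (max C 0).toNNReal, lipschitzWith_of_nnnorm_deriv_le hdiff hbound⟩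

open Metric in
lemma dugundji {X Z : Type*} [MetricSpace X] [NormedAddCommGroup Z] [NormedSpace ℝ Z]
    (A : Set X) (hA : IsClosed A) (u : X → Z)
    (hu : ∀ a ∈ A, ContinuousWithinAt u A a) :
    ∃ h : X → Z, Continuous h ∧ ∀ a ∈ A, h a = u a := by
  rcases A.eq_empty_or_nonempty with rfl | hne
  · exact ⟨fun _ => 0, continuous_const, by simp⟩
  classical
  set Y := ↥(Aᶜ) with hY
  set r : Y → ℝ := fun p => infDist (p : X) A with hr
  have hrpos : ∀ p : Y, 0 < r p := fun p => (hA.notMem_iff_infDist_pos hne).mp p.2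
  set V : Y → Set Y := fun p => Subtype.val ⁻¹' ball (p : X) (r p / 4) with hV
  have hVopen : ∀ p, IsOpen (V p) := fun p => isOpen_ball.preimage continuous_subtype_val
  have hVcover : (univ : Set Y) ⊆ ⋃ p, V p := fun q _ => by
    refine mem_iUnion.mpr ⟨q, ?_⟩
    have : dist (q:X) (q:X) < r q / 4 := by simpa using by linarith [hrpos q]
    simpa [hV, mem_ball] using this
  obtain ⟨φ, hφ⟩ := PartitionOfUnity.exists_isSubordinate isClosed_univ V hVopen hVcover
  have ha : ∀ p : Y, ∃ z ∈ A, dist (p : X) z < 2 * r p := fun p =>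
    (infDist_lt_iff hne).mp (by linarith [hrpos p])
  choose a haA hadist using ha
  set h : X → Z := fun x => if hx : x ∈ A then u x else ∑ᶠ p, φ p ⟨x, hx⟩ • u (a p) with hh
  have hres : ∀ q : Y, h (q : X) = ∑ᶠ p, φ p q • u (a p) := fun q => by
    rw [hh]; simp only [dif_neg (show (q:X) ∉ A from q.2)]; rfl
  have hcontU : ContinuousOn h Aᶜ := by
    rw [continuousOn_iff_continuous_restrict]
    have : (Aᶜ).domRestrict h = fun q : Y => ∑ᶠ p, φ p q • u (a p) := funext fun q => hres q
    rw [this]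
    exact φ.continuous_finsum_smul fun p x _ => continuousAt_const
  refine ⟨h, ?_, fun x hx => by rw [hh]; simp [dif_pos hx]⟩
  rw [continuous_iff_continuousAt]
  intro x₀
  by_cases hx₀ : x₀ ∈ A
  swap
  · exact hcontU.continuousAt ((hA.isOpen_compl).mem_nhds hx₀)
  -- continuity at a point of A
  rw [Metric.continuousAt_iff]
  intro ε hε
  obtain ⟨δ₀, hδ₀, hδ₀'⟩ := Metric.continuousWithinAt_iff.mp (hu x₀ hx₀) (ε/2) (by linarith)
  refine ⟨δ₀/8, by linarith, ?_⟩
  intro x hx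
  have hhx₀ : h x₀ = u x₀ := by rw [hh]; simp [dif_pos hx₀]
  by_cases hxA : x ∈ A
  · have h2 : dist (u x) (u x₀) < ε/2 := hδ₀' hxA (by linarith)
    have hhx : h x = u x := by rw [hh]; simp [dif_pos hxA]
    rw [hhx, hhx₀]; linarith
  · set q : Y := ⟨x, hxA⟩ with hq
    have hx' : h x = ∑ p ∈ φ.finsupport q, φ p q • u (a p) := by
      rw [show h x = h (q : X) from rfl, hres q,
        ← φ.sum_finsupport_smul_eq_finsum (fun p _ => u (a p))]
    have hsum1 : ∑ p ∈ φ.finsupport q, φ p q = 1 := φ.sum_finsupport (mem_univ q)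
    have key : ∀ p ∈ φ.finsupport q, dist (u (a p)) (u x₀) < ε/2 := by
      intro p hp
      have hqsupp : q ∈ Function.support (φ p) := (φ.mem_finsupport q).mp hp
      have hqV : q ∈ V p := hφ p (subset_closure hqsupp)
      have hdxq : dist x (p : X) < r p / 4 := by simpa [hV, mem_ball] using hqV
      have hrle : r p ≤ dist (p : X) x₀ := infDist_le_dist_of_mem hx₀
      have h1 : dist (p : X) x₀ ≤ dist (p:X) x + dist x x₀ := dist_triangle _ _ _
      have hrp : r p < (4/3) * (δ₀/8) := by
        have := dist_comm x (p:X) ▸ hdxq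
        nlinarith [hrpos p]
      have h2 : dist (a p) x₀ ≤ dist (a p) (p:X) + dist (p:X) x + dist x x₀ :=
        dist_triangle4 _ _ _ _
      have h3 : dist (a p) (p:X) < 2 * r p := dist_comm (p:X) (a p) ▸ hadist p
      have h4 : dist (↑p : X) x < r p / 4 := dist_comm x (p:X) ▸ hdxq
      have : dist (a p) x₀ < δ₀ := by nlinarith [hx]
      exact hδ₀' (haA p) this
    have hmain : dist (h x) (u x₀) < ε := by
      rw [hx', dist_eq_norm]
      have heq : ∑ p ∈ φ.finsupport q, φ p q • u (a p) - u x₀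
          = ∑ p ∈ φ.finsupport q, φ p q • (u (a p) - u x₀) := by
        simp only [smul_sub, Finset.sum_sub_distrib]
        rw [← Finset.sum_smul, hsum1, one_smul]
      rw [heq]
      calc ‖∑ p ∈ φ.finsupport q, φ p q • (u (a p) - u x₀)‖
          ≤ ∑ p ∈ φ.finsupport q, ‖φ p q • (u (a p) - u x₀)‖ := norm_sum_le _ _
        _ ≤ ∑ p ∈ φ.finsupport q, φ p q * (ε/2) := by
            refine Finset.sum_le_sum fun p hp => ?_
            rw [norm_smul, Real.norm_eq_abs, abs_of_nonneg (φ.nonneg p q)]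
            exact mul_le_mul_of_nonneg_left
              (le_of_lt (dist_eq_norm (u (a p)) (u x₀) ▸ key p hp)) (φ.nonneg p q)
        _ = ε/2 := by rw [← Finset.sum_mul, hsum1, one_mul]
        _ < ε := by linarith
    rw [hhx₀]; exact hmain

open Metric in
lemma pl_to_stable {X Z : Type*} [NormedAddCommGroup X] [NormedAddCommGroup Z]
    [NormedSpace ℝ Z] (g : X → Z) (f : X → X → Z) (hdiag : ∀ x, f x x = g x)
    (hcx : ∀ y, Continuous fun x => f x y)
    (hpl : ∀ x₀, ∃ C : ℝ, ∀ y, ‖f x₀ y - f x₀ x₀‖ ≤ C * ‖y - x₀‖) :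
    ∃ gs : ℕ → X → Z, (∀ n, Continuous (gs n)) ∧ ∀ x, ∃ N : ℕ, ∀ n ≥ N, gs n x = g x := by
  classical
  set XN : ℕ → Set X := fun N => {x | ∀ y, ‖f x y - f x x‖ ≤ N * ‖y - x‖} with hXN
  have hmono : ∀ {N M : ℕ}, N ≤ M → XN N ⊆ XN M := by
    intro N M hNM x hx y
    exact (hx y).trans (mul_le_mul_of_nonneg_right (by exact_mod_cast hNM) (norm_nonneg _))
  have hcover : ∀ x, ∃ N : ℕ, x ∈ XN N := by
    intro x
    obtain ⟨C, hC⟩ := hpl x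
    exact ⟨⌈C⌉₊, fun y => (hC y).trans
      (mul_le_mul_of_nonneg_right (Nat.le_ceil C) (norm_nonneg _))⟩
  have hcwa : ∀ N : ℕ, ∀ a ∈ closure (XN N), ContinuousWithinAt g (closure (XN N)) a := by
    intro N a ha
    rw [Metric.continuousWithinAt_iff]
    intro ε hε
    obtain ⟨δ₁, hδ₁, hδ₁'⟩ := Metric.continuousAt_iff.mp ((hcx a).continuousAt (x := a))
      (ε/8) (by linarith)
    have hNpos : (0:ℝ) < N + 1 := by positivity
    set δ : ℝ := min (δ₁/2) (ε/(8*(N+1))) with hδdef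
    have hδpos : 0 < δ := lt_min (by linarith) (by positivity)
    refine ⟨δ, hδpos, ?_⟩
    intro z hz hza
    obtain ⟨δ₂, hδ₂, hδ₂'⟩ := Metric.continuousAt_iff.mp ((hcx z).continuousAt (x := z))
      (ε/8) (by linarith)
    obtain ⟨x, hxX, hzx⟩ := Metric.mem_closure_iff.mp hz (min δ₂ δ) (lt_min hδ₂ hδpos)
    have hzx₂ : dist z x < δ₂ := hzx.trans_le (min_le_left _ _)
    have hzxδ : dist z x < δ := hzx.trans_le (min_le_right _ _)
    have t1 : dist (f z z) (f x z) < ε/8 := by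
      rw [dist_comm]
      exact hδ₂' (by rwa [dist_comm x z])
    have hXx := hxX
    rw [hXN, mem_setOf_eq] at hXx
    have t2 : dist (f x z) (f x x) ≤ N * δ := by
      rw [dist_eq_norm]
      exact (hXx z).trans (mul_le_mul_of_nonneg_left
        (by rw [← dist_eq_norm]; exact le_of_lt hzxδ) (by positivity))
    have t3 : dist (f x x) (f x a) ≤ N * (2*δ) := by
      rw [dist_comm, dist_eq_norm]
      refine (hXx a).trans (mul_le_mul_of_nonneg_left ?_ (by positivity))
      rw [← dist_eq_norm]
      calc dist a x ≤ dist a z + dist z x := dist_triangle _ _ _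
        _ ≤ δ + δ := by rw [dist_comm a z]; linarith
        _ = 2*δ := by ring
    have t4 : dist (f x a) (f a a) < ε/8 := by
      refine hδ₁' ?_
      calc dist x a ≤ dist x z + dist z a := dist_triangle _ _ _
        _ < δ + δ := by rw [dist_comm x z]; linarith
        _ ≤ δ₁ := by
            have := min_le_left (δ₁/2) (ε/(8*(N+1)))
            linarith
    have hNδ : N * δ ≤ ε/8 := by
      have h1 : δ ≤ ε/(8*(N+1)) := min_le_right _ _
      have h2 : (N:ℝ) * δ ≤ N * (ε/(8*(N+1))) :=
        mul_le_mul_of_nonneg_left h1 (by positivity)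
      have h3 : (N:ℝ) * (ε/(8*(N+1))) ≤ ε/8 := by
        rw [mul_div_assoc', div_le_div_iff₀ (by positivity) (by norm_num)]
        nlinarith [Nat.cast_nonneg (α := ℝ) N]
      linarith
    have htr1 := dist_triangle4 (f z z) (f x z) (f x x) (f a a)
    have htr2 := dist_triangle (f x x) (f x a) (f a a)
    have hgz : g z = f z z := (hdiag z).symm
    have hga : g a = f a a := (hdiag a).symm
    rw [hgz, hga]
    linarith
  choose gs hgscont hgseq using fun n => dugundji (closure (XN n)) isClosed_closure g (hcwa n)
  refine ⟨gs, hgscont, fun x => ?_⟩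
  obtain ⟨N, hN⟩ := hcover x
  exact ⟨N, fun n hn => hgseq n x (subset_closure (hmono hn hN))⟩

open Metric in
lemma stable_to_f {X Z : Type*} [NormedAddCommGroup X] [NormedSpace ℝ X]
    [NormedAddCommGroup Z] [NormedSpace ℝ Z]
    (hnorm : ∀ x : X, x ≠ 0 → DifferentiableAt ℝ (fun y : X => ‖y‖) x)
    (g : X → Z) (gs : ℕ → X → Z) (hc : ∀ n, Continuous (gs n))
    (hstab : ∀ x, ∃ N : ℕ, ∀ n ≥ N, gs n x = g x) :
    ∃ f : X → X → Z, (∀ x, f x x = g x) ∧ (∀ y, Continuous fun x => f x y) ∧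
      (∀ x, (∃ K : ℝ≥0, LipschitzWith K (f x)) ∧ Differentiable ℝ (f x)) := by
  classical
  obtain ⟨τ, hτ1, hτ0, hτnn, hτle1, hτdiff, L, hτlip⟩ := exists_tau
  -- the closed sets F n
  set F : ℕ → Set X := fun n => ⋂ m : ℕ, {x | gs (n + m) x = gs n x} with hF
  have hFmem : ∀ {n : ℕ} {x : X}, x ∈ F n ↔ ∀ m, n ≤ m → gs m x = gs n x := by
    intro n x
    constructor
    · intro h m hm
      have := mem_iInter.mp h (m - n)
      rwa [Nat.add_sub_cancel' hm] at this
    · intro h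
      exact mem_iInter.mpr fun m => h (n + m) (Nat.le_add_right _ _)
  have hFclosed : ∀ n, IsClosed (F n) :=
    fun n => isClosed_iInter fun m => isClosed_eq (hc (n + m)) (hc n)
  have hFmono : ∀ {n m : ℕ}, n ≤ m → F n ⊆ F m := by
    intro n m hnm x hx
    rw [hFmem]
    intro k hk
    rw [hFmem.mp hx k (hnm.trans hk), hFmem.mp hx m hnm]
  choose Nx hNx using hstab
  have hxFN : ∀ x, x ∈ F (Nx x) := fun x =>
    hFmem.mpr fun m hm => by rw [hNx x m hm, hNx x (Nx x) le_rfl]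
  -- increments
  set c : ℕ → X → Z := fun n x => gs (n + 1) x - gs n x with hcdef
  have hccont : ∀ n, Continuous (c n) := fun n => (hc (n + 1)).sub (hc n)
  have hcF : ∀ {n x}, x ∈ F n → c n x = 0 := by
    intro n x hx
    rw [hcdef]
    simp [hFmem.mp hx (n + 1) (Nat.le_succ n)]
  -- the radius functions
  set d : ℕ → X → ℝ := fun n x => if (F n).Nonempty then infDist x (F n) else 1 with hd
  have hdcont : ∀ n, Continuous (d n) := by
    intro n
    by_cases h : (F n).Nonempty <;> simp only [hd, if_pos, if_neg, h, if_true, if_false]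
    · exact continuous_infDist_pt _
    · exact continuous_const
  have hdnn : ∀ n x, 0 ≤ d n x := by
    intro n x
    by_cases h : (F n).Nonempty <;> simp only [hd, h, if_true, if_false]
    · exact infDist_nonneg
    · norm_num
  set ρ : ℕ → X → ℝ := fun n x => (2:ℝ)⁻¹ ^ n * min 1 (d n x) with hρ
  have hρcont : ∀ n, Continuous (ρ n) :=
    fun n => continuous_const.mul (continuous_const.min (hdcont n))
  have hρnn : ∀ n x, 0 ≤ ρ n x := fun n x => by
    have := hdnn n x
    have h2 : (0:ℝ) ≤ (2:ℝ)⁻¹ ^ n := by positivity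
    exact mul_nonneg h2 (le_min (by norm_num) this)
  have hρpos : ∀ {n x}, x ∉ F n → 0 < ρ n x := by
    intro n x hx
    have hdpos : 0 < d n x := by
      by_cases h : (F n).Nonempty <;> simp only [hd, h, if_true, if_false]
      · exact ((hFclosed n).notMem_iff_infDist_pos h).mp hx
      · norm_num
    exact mul_pos (by positivity) (lt_min (by norm_num) hdpos)
  -- the building blocks
  set term : ℕ → X → X → Z := fun n x y => τ ((ρ n x)⁻¹ * ‖y - x‖) • c n x with hterm
  have hterm_zero : ∀ {n x}, x ∈ F n → ∀ y, term n x y = 0 := by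
    intro n x hx y
    rw [hterm]
    simp [hcF hx]
  have hterm_diag : ∀ n x, term n x x = c n x := by
    intro n x
    rw [hterm]
    simp [hτ1 0 (by norm_num)]
  have hterm_norm : ∀ n x y, ‖term n x y‖ ≤ ‖c n x‖ := by
    intro n x y
    rw [hterm]
    simp only [norm_smul, Real.norm_eq_abs]
    have h1 : |τ ((ρ n x)⁻¹ * ‖y - x‖)| ≤ 1 :=
      abs_le.mpr ⟨by linarith [hτnn ((ρ n x)⁻¹ * ‖y - x‖)], hτle1 _⟩
    nlinarith [norm_nonneg (c n x), abs_nonneg (τ ((ρ n x)⁻¹ * ‖y - x‖))]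
  -- support estimate: for y ∈ F M and n ≥ max M 2 the term vanishes identically
  have hsupp : ∀ (M n : ℕ) (y : X), y ∈ F M → M ≤ n → 2 ≤ n → ∀ x, term n x y = 0 := by
    intro M n y hy hMn h2n x
    by_cases hx : x ∈ F n
    · exact hterm_zero hx y
    · have hyn : y ∈ F n := hFmono hMn hy
      have hρx := hρpos hx
      have hdle : d n x ≤ ‖y - x‖ := by
        have hne : (F n).Nonempty := ⟨y, hyn⟩
        simp only [hd, hne, if_true]
        calc infDist x (F n) ≤ dist x y := infDist_le_dist_of_mem hyn
          _ = ‖y - x‖ := by rw [dist_eq_norm, norm_sub_rev]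
      have hpow : (2:ℝ)⁻¹ ^ n ≤ (2:ℝ)⁻¹ ^ 2 :=
        pow_le_pow_of_le_one (by norm_num) (by norm_num) h2n
      have hρle : ρ n x ≤ (1/4) * ‖y - x‖ := by
        have h1 : min 1 (d n x) ≤ d n x := min_le_right _ _
        have h2 : ρ n x ≤ (2:ℝ)⁻¹ ^ n * d n x :=
          mul_le_mul_of_nonneg_left h1 (by positivity)
        have h3 : (2:ℝ)⁻¹ ^ n * d n x ≤ (2:ℝ)⁻¹ ^ 2 * d n x :=
          mul_le_mul_of_nonneg_right hpow (hdnn n x)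
        have : ((2:ℝ)⁻¹) ^ 2 = (1/4 : ℝ) := by norm_num
        calc ρ n x ≤ (2:ℝ)⁻¹ ^ 2 * d n x := le_trans h2 h3
          _ = (1/4) * d n x := by rw [this]
          _ ≤ (1/4) * ‖y - x‖ := by linarith [hdle]
      have harg : 2 ≤ (ρ n x)⁻¹ * ‖y - x‖ := by
        have h4 : 2 * ρ n x ≤ ‖y - x‖ := by linarith [hρx]
        calc (2:ℝ) = (ρ n x)⁻¹ * (2 * ρ n x) := by field_simp
          _ ≤ (ρ n x)⁻¹ * ‖y - x‖ :=
            mul_le_mul_of_nonneg_left h4 (by positivity)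
      rw [hterm]
      simp [hτ0 _ harg]
  -- the function f
  set f : X → X → Z := fun x y => gs 0 x + ∑' n, term n x y with hfdef
  have hfx : ∀ x y, f x y = gs 0 x + ∑ n ∈ Finset.range (Nx x), term n x y := by
    intro x y
    show gs 0 x + ∑' n, term n x y = _
    congr 1
    refine tsum_eq_sum fun n hn => ?_
    have : Nx x ≤ n := le_of_not_gt fun h => hn (Finset.mem_range.mpr h)
    exact hterm_zero (hFmono this (hxFN x)) y
  -- per-term regularity in y (for fixed x)
  have hterm_lip : ∀ n x, ∃ K : ℝ≥0, LipschitzWith K (fun y => term n x y) := by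
    intro n x
    by_cases hc0 : c n x = 0
    · refine ⟨0, ?_⟩
      have h0 : (fun y => term n x y) = fun _ => (0 : Z) := by
        funext y; simp [hterm, hc0]
      rw [h0]
      exact LipschitzWith.const 0
    · have hx : x ∉ F n := fun h => hc0 (hcF h)
      have hρx := hρpos hx
      have lA : LipschitzWith 1 (fun y : X => y - x) :=
        (IsometryEquiv.subRight x).isometry.lipschitz
      have lB : LipschitzWith (1 * 1) (fun y : X => ‖y - x‖) := lipschitzWith_one_norm.comp lA
      have lC : LipschitzWith (Real.toNNReal (ρ n x)⁻¹) (fun t : ℝ => (ρ n x)⁻¹ * t) := by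
        refine LipschitzWith.of_dist_le_mul fun a b => ?_
        rw [Real.dist_eq, Real.dist_eq, ← mul_sub, abs_mul, abs_of_pos (by positivity),
          Real.coe_toNNReal _ (by positivity)]
      have lE : LipschitzWith ‖c n x‖₊ (fun s : ℝ => s • c n x) := by
        refine LipschitzWith.of_dist_le_mul fun a b => ?_
        rw [dist_eq_norm, ← sub_smul, norm_smul, Real.dist_eq, coe_nnnorm, mul_comm,
          Real.norm_eq_abs]
      exact ⟨_, lE.comp (hτlip.comp (lC.comp lB))⟩
  have hterm_diffable : ∀ n x, Differentiable ℝ (fun y => term n x y) := by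
    intro n x
    by_cases hc0 : c n x = 0
    · have h0 : (fun y => term n x y) = fun _ => (0 : Z) := by
        funext y; simp [hterm, hc0]
      rw [h0]
      exact differentiable_const 0
    · have hx : x ∉ F n := fun h => hc0 (hcF h)
      have hρx := hρpos hx
      intro y₀
      by_cases hyx : y₀ = x
      · refine (differentiableAt_const (c n x)).congr_of_eventuallyEq ?_
        have hball : Metric.ball x (ρ n x) ∈ 𝓝 y₀ := by
          rw [hyx]; exact Metric.ball_mem_nhds _ hρx
        refine eventually_of_mem hball fun y hy => ?_
        have hlt : ‖y - x‖ < ρ n x := by rwa [Metric.mem_ball, dist_eq_norm] at hy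
        have harg : (ρ n x)⁻¹ * ‖y - x‖ ≤ 1 := by
          have h1 : (ρ n x)⁻¹ * ‖y - x‖ ≤ (ρ n x)⁻¹ * ρ n x :=
            mul_le_mul_of_nonneg_left (le_of_lt hlt) (by positivity)
          rwa [inv_mul_cancel₀ (ne_of_gt hρx)] at h1
        simp [hterm, hτ1 _ harg]
      · have hsub : DifferentiableAt ℝ (fun y : X => y - x) y₀ :=
          (differentiable_id.sub_const x).differentiableAt
        have hne : y₀ - x ≠ 0 := sub_ne_zero.mpr hyx
        have h1 : DifferentiableAt ℝ (fun y : X => ‖y - x‖) y₀ :=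
          DifferentiableAt.comp y₀ (hnorm _ hne) hsub
        have h2 : DifferentiableAt ℝ (fun y : X => (ρ n x)⁻¹ * ‖y - x‖) y₀ :=
          (differentiableAt_const _).mul h1
        have h3 : DifferentiableAt ℝ (fun y : X => τ ((ρ n x)⁻¹ * ‖y - x‖)) y₀ :=
          DifferentiableAt.comp y₀ (hτdiff _) h2
        exact h3.smul_const (c n x)
  refine ⟨f, ?_, ?_, ?_⟩
  · -- diagonal
    intro x
    rw [hfx x x, Finset.sum_congr rfl fun n _ => hterm_diag n x,
      Finset.sum_range_sub (fun n => gs n x) (Nx x), hNx x (Nx x) le_rfl]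
    abel
  · -- continuity in the first variable
    intro y
    have hKy : ∀ x : X, ∀ n, max (Nx y) 2 ≤ n → term n x y = 0 := fun x n hn =>
      hsupp (Nx y) n y (hxFN y) (le_trans (le_max_left _ _) hn)
        (le_trans (le_max_right _ _) hn) x
    have hfy : (fun x => f x y)
        = fun x => gs 0 x + ∑ n ∈ Finset.range (max (Nx y) 2), term n x y := by
      funext x
      show gs 0 x + ∑' n, term n x y = _
      congr 1
      exact tsum_eq_sum fun n hn =>
        hKy x n (le_of_not_gt fun h => hn (Finset.mem_range.mpr h))
    rw [hfy]
    refine (hc 0).add (continuous_finset_sum _ fun n _ => ?_)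
    rw [continuous_iff_continuousAt]
    intro x₀
    by_cases hx₀ : x₀ ∈ F n
    · have hval : term n x₀ y = 0 := hterm_zero hx₀ y
      rw [ContinuousAt, hval]
      refine squeeze_zero_norm (fun x => hterm_norm n x y) ?_
      have htc : Tendsto (fun x => ‖c n x‖) (𝓝 x₀) (𝓝 ‖c n x₀‖) := (hccont n).norm.tendsto x₀
      rwa [hcF hx₀, norm_zero] at htc
    · have hρx₀ := hρpos hx₀
      have h1 : ContinuousAt (fun x => (ρ n x)⁻¹ * ‖y - x‖) x₀ :=
        (((hρcont n).continuousAt).inv₀ (ne_of_gt hρx₀)).mul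
          ((continuous_const.sub continuous_id).norm.continuousAt)
      exact ((hτdiff.continuous.continuousAt).comp h1).smul ((hccont n).continuousAt)
  · -- regularity in the second variable
    intro x
    have hfx' : f x = fun y => gs 0 x + ∑ n ∈ Finset.range (Nx x), term n x y :=
      funext fun y => hfx x y
    constructor
    · have hgen : ∀ s : Finset ℕ, ∃ K : ℝ≥0, LipschitzWith K (fun y => ∑ n ∈ s, term n x y) := by
        intro s
        classical
        induction s using Finset.induction_on with
        | empty => exact ⟨0, by simpa using LipschitzWith.const (0 : Z)⟩
        | @insert m s hni ih =>
          obtain ⟨K, hK⟩ := ih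
          obtain ⟨K', hK'⟩ := hterm_lip m x
          refine ⟨K' + K, ?_⟩
          have hadd := hK'.add hK
          have heq : (fun y => term m x y + ∑ n ∈ s, term n x y)
              = fun y => ∑ n ∈ insert m s, term n x y := by
            funext y; rw [Finset.sum_insert hni]
          rwa [heq] at hadd
      obtain ⟨K, hK⟩ := hgen (Finset.range (Nx x))
      refine ⟨0 + K, ?_⟩
      rw [hfx']
      exact (LipschitzWith.const (gs 0 x)).add hK
    · rw [hfx']
      exact (differentiable_const _).add (Differentiable.fun_sum fun n _ => hterm_diffable n x)

/-- Theorem 7.2: for a normed space `X` whose norm is Fréchet differentiable at every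
nonzero point and a normed space `Z`, a mapping `g : X → Z` is of the stable first Baire
class iff it is the diagonal of a mapping `f : X² → Z` continuous in the first variable
and Lipschitz and Fréchet differentiable in the second one, iff it is the diagonal of a
mapping `f : X² → Z` continuous in the first variable and pointwise Lipschitz in the
second variable at every point of the diagonal. -/
theorem stmt_13 {X Z : Type*} [NormedAddCommGroup X] [NormedSpace ℝ X]
    [NormedAddCommGroup Z] [NormedSpace ℝ Z]
    (hnorm : ∀ x : X, x ≠ 0 → DifferentiableAt ℝ (fun y : X => ‖y‖) x)
    (g : X → Z) :
    ((∃ gs : ℕ → X → Z, (∀ n, Continuous (gs n)) ∧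
        ∀ x, ∃ N : ℕ, ∀ n ≥ N, gs n x = g x) ↔
      (∃ f : X → X → Z, (∀ x, f x x = g x) ∧
        (∀ y, Continuous fun x => f x y) ∧
        (∀ x, (∃ K : ℝ≥0, LipschitzWith K (f x)) ∧ Differentiable ℝ (f x)))) ∧
    ((∃ f : X → X → Z, (∀ x, f x x = g x) ∧
        (∀ y, Continuous fun x => f x y) ∧
        (∀ x, (∃ K : ℝ≥0, LipschitzWith K (f x)) ∧ Differentiable ℝ (f x))) ↔
      (∃ f : X → X → Z, (∀ x, f x x = g x) ∧
        (∀ y, Continuous fun x => f x y) ∧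
        (∀ x₀, ∃ C : ℝ, ∀ y, ‖f x₀ y - f x₀ x₀‖ ≤ C * ‖y - x₀‖))) := by
  have lip_to_pl : ∀ (f : X → X → Z), (∀ x, (∃ K : ℝ≥0, LipschitzWith K (f x)) ∧
      Differentiable ℝ (f x)) → ∀ x₀, ∃ C : ℝ, ∀ y, ‖f x₀ y - f x₀ x₀‖ ≤ C * ‖y - x₀‖ := by
    intro f hreg x₀
    obtain ⟨⟨K, hK⟩, -⟩ := hreg x₀
    refine ⟨K, fun y => ?_⟩
    have := hK.dist_le_mul y x₀
    rwa [dist_eq_norm, dist_eq_norm] at this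
  constructor
  · constructor
    · rintro ⟨gs, hcont, hstab⟩
      exact stable_to_f hnorm g gs hcont hstab
    · rintro ⟨f, hdiag, hcx, hreg⟩
      exact pl_to_stable g f hdiag hcx (lip_to_pl f hreg)
  · constructor
    · rintro ⟨f, hdiag, hcx, hreg⟩
      exact ⟨f, hdiag, hcx, lip_to_pl f hreg⟩
    · rintro ⟨f, hdiag, hcx, hpl⟩
      obtain ⟨gs, hcont, hstab⟩ := pl_to_stable g f hdiag hcx hpl
      exact stable_to_f hnorm g gs hcont hstab
end
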